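/- arXiv:2301.13187 — 8 statements merged into one kernel-verified Lean document; each statement's English description precedes it below -/
import Mathlib

section
/- Let x* be any minimizer of the dual flow diffusion problem. Then the number of nonzero coordinates of x* is at most the total source mass: |supp(x*)| ≤ ‖Δ‖₁. -/
/-!
STATEMENT 0. Let `G` be a finite undirected connected graph on `n` nodes with positive,
symmetric edge weights `w` (with `w i j = 0` encoding the absence of an edge). Given a
nonnegative source vector `Δ` and sink capacities `T` with `T i ≥ 1`, the dual flow
diffusion objective is `F(x) = ½ xᵀLx + xᵀ(T − Δ)`, which in terms of the weights reads
`F(x) = ¼ ∑ᵢ∑ⱼ w i j (x i − x j)² + ∑ᵢ x i (T i − Δ i)`.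
If `x*` is a minimizer of `F` over `{x : x ≥ 0}`, then `|supp(x*)| ≤ ‖Δ‖₁`.
-/

/-- Dual flow diffusion objective `½ xᵀLx + xᵀ(T − Δ)` written with edge weights:
`¼ ∑ i ∑ j, w i j (x i − x j)² + ∑ i, x i (T i − Δ i)`. -/
noncomputable def dualObj {n : ℕ} (w : Fin n → Fin n → ℝ) (Δ T : Fin n → ℝ)
    (x : Fin n → ℝ) : ℝ :=
  (1 / 4) * ∑ i, ∑ j, w i j * (x i - x j) ^ 2 + ∑ i, x i * (T i - Δ i)

lemma grad_zero (g d xi : ℝ) (hd : 0 ≤ d) (hxi : 0 < xi)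
    (h : ∀ t : ℝ, 0 ≤ xi + t → 0 ≤ t * g + t ^ 2 / 2 * d) : g = 0 := by
  have hge : 0 ≤ g := by
    by_contra h'
    push_neg at h'
    have hd1 : (0:ℝ) < d + 1 := by linarith
    have ht : 0 < -g / (d + 1) := div_pos (by linarith) hd1
    have key := h (-g / (d + 1)) (by linarith)
    have key2 : 0 ≤ (d + 1) ^ 2 * (-g / (d + 1) * g + (-g / (d + 1)) ^ 2 / 2 * d) :=
      mul_nonneg (sq_nonneg _) key
    have key3 : (d + 1) ^ 2 * (-g / (d + 1) * g + (-g / (d + 1)) ^ 2 / 2 * d)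
        = g ^ 2 * (d / 2 - (d + 1)) := by
      field_simp
      ring
    rw [key3] at key2
    have hgg : 0 < g * g := mul_pos_of_neg_of_neg h' h'
    nlinarith
  have hle : g ≤ 0 := by
    by_contra h'
    push_neg at h'
    have hd1 : (0:ℝ) < d + 1 := by linarith
    set s := min xi (g / (d + 1)) with hs
    have hs1 : s ≤ xi := min_le_left _ _
    have hs2 : s ≤ g / (d + 1) := min_le_right _ _
    have hs0 : 0 < s := lt_min hxi (div_pos h' hd1)
    have key := h (-s) (by linarith)
    rw [le_div_iff₀ hd1] at hs2
    nlinarith [mul_pos hs0 hs0, mul_le_mul_of_nonneg_left hs2 hs0.le,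
      mul_nonneg (mul_nonneg hs0.le hs0.le) hd]
  linarith
lemma dualObj_expand {n : ℕ} (w : Fin n → Fin n → ℝ) (Δ T : Fin n → ℝ)
    (hsymm : ∀ i j, w i j = w j i) (hloop : ∀ i, w i i = 0)
    (x : Fin n → ℝ) (i : Fin n) (t : ℝ) :
    dualObj w Δ T (Function.update x i (x i + t))
    = dualObj w Δ T x
      + t * (∑ j, w i j * (x i - x j) + (T i - Δ i))
      + t ^ 2 / 2 * ∑ j, w i j := by
  unfold dualObj
  have hterm : ∀ a b : Fin n,
      w a b * (Function.update x i (x i + t) a - Function.update x i (x i + t) b) ^ 2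
      = w a b * (x a - x b) ^ 2
        + (2 * t) * ((if a = i then (1:ℝ) else 0) * (w a b * (x a - x b)))
        - (2 * t) * ((if b = i then (1:ℝ) else 0) * (w a b * (x a - x b)))
        + t ^ 2 * ((if a = i then (1:ℝ) else 0) * w a b)
        + t ^ 2 * ((if b = i then (1:ℝ) else 0) * w a b)
        - (2 * t ^ 2) * ((if a = i then (1:ℝ) else 0) * ((if b = i then (1:ℝ) else 0) * w a b)) := by
    intro a b
    simp only [Function.update_apply]
    by_cases ha : a = i <;> by_cases hb : b = i <;> simp [ha, hb] <;> ring
  have hlin : ∀ a : Fin n, Function.update x i (x i + t) a * (T a - Δ a)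
      = x a * (T a - Δ a) + t * ((if a = i then (1:ℝ) else 0) * (T a - Δ a)) := by
    intro a
    simp only [Function.update_apply]
    by_cases ha : a = i <;> simp [ha] <;> ring
  simp only [hterm, hlin]
  simp only [Finset.sum_add_distrib, Finset.sum_sub_distrib, ← Finset.mul_sum,
    ite_mul, one_mul, zero_mul, Finset.sum_ite_eq', Finset.mem_univ, if_true,
    Finset.sum_ite_irrel, Finset.sum_const_zero]
  have h1 : ∑ a, w a i * (x a - x i) = - ∑ j, w i j * (x i - x j) := by
    rw [← Finset.sum_neg_distrib]
    exact Finset.sum_congr rfl fun a _ => by rw [hsymm a i]; ring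
  have h2 : ∑ a, w a i = ∑ j, w i j := Finset.sum_congr rfl fun a _ => hsymm a i
  rw [h1, h2, hloop i]
  ring

theorem stmt0 {n : ℕ} (w : Fin n → Fin n → ℝ) (Δ T : Fin n → ℝ)
    (hsymm : ∀ i j, w i j = w j i)
    (hnonneg : ∀ i j, 0 ≤ w i j)
    (hloop : ∀ i, w i i = 0)
    (hconn : ∀ i j : Fin n, Relation.ReflTransGen (fun a b => 0 < w a b) i j)
    (hΔ : ∀ i, 0 ≤ Δ i) (hT : ∀ i, 1 ≤ T i)
    (xstar : Fin n → ℝ)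
    (hx_nonneg : ∀ i, 0 ≤ xstar i)
    (hx_min : ∀ y : Fin n → ℝ, (∀ i, 0 ≤ y i) →
      dualObj w Δ T xstar ≤ dualObj w Δ T y) :
    ((Finset.univ.filter (fun i => xstar i ≠ 0)).card : ℝ) ≤ ∑ i, |Δ i| := by
  classical
  set S := Finset.univ.filter (fun i => xstar i ≠ 0) with hS
  have hSpos : ∀ i ∈ S, 0 < xstar i := fun i hi =>
    lt_of_le_of_ne (hx_nonneg i) (Ne.symm (Finset.mem_filter.mp hi).2)
  -- gradient vanishes on the support
  have hgrad : ∀ i ∈ S, ∑ j, w i j * (xstar i - xstar j) + (T i - Δ i) = 0 := by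
    intro i hi
    apply grad_zero _ (∑ j, w i j) (xstar i)
      (Finset.sum_nonneg fun j _ => hnonneg i j) (hSpos i hi)
    intro t ht
    have hy : ∀ a, 0 ≤ Function.update xstar i (xstar i + t) a := by
      intro a
      rw [Function.update_apply]
      by_cases ha : a = i <;> simp [ha, ht, hx_nonneg a]
    have := hx_min _ hy
    rw [dualObj_expand w Δ T hsymm hloop xstar i t] at this
    linarith
  have hsum0 : ∑ i ∈ S, (∑ j, w i j * (xstar i - xstar j) + (T i - Δ i)) = 0 :=
    Finset.sum_eq_zero hgrad
  -- the quadratic part summed over the support is nonnegative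
  have hquad : 0 ≤ ∑ i ∈ S, ∑ j, w i j * (xstar i - xstar j) := by
    have hsplit : ∀ i ∈ S, ∑ j, w i j * (xstar i - xstar j)
        = ∑ j ∈ S, w i j * (xstar i - xstar j) + ∑ j ∈ Sᶜ, w i j * (xstar i - xstar j) :=
      fun i _ => (Finset.sum_add_sum_compl S _).symm
    rw [Finset.sum_congr rfl hsplit, Finset.sum_add_distrib]
    have hA : ∑ i ∈ S, ∑ j ∈ S, w i j * (xstar i - xstar j) = 0 := by
      have h := Finset.sum_comm (s := S) (t := S) (f := fun i j => w i j * (xstar i - xstar j))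
      have h2 : ∑ j ∈ S, ∑ i ∈ S, w i j * (xstar i - xstar j)
          = - ∑ i ∈ S, ∑ j ∈ S, w i j * (xstar i - xstar j) := by
        rw [← Finset.sum_neg_distrib]
        refine Finset.sum_congr rfl fun j _ => ?_
        rw [← Finset.sum_neg_distrib]
        exact Finset.sum_congr rfl fun i _ => by rw [hsymm i j]; ring
      have h3 := h.trans h2
      linarith [h3]
    rw [hA, zero_add]
    refine Finset.sum_nonneg fun i hi => Finset.sum_nonneg fun j hj => ?_
    have hj0 : xstar j = 0 := by
      have := Finset.mem_compl.mp hj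
      simp only [hS, Finset.mem_filter, Finset.mem_univ, true_and, not_not] at this
      exact this
    rw [hj0, sub_zero]
    exact mul_nonneg (hnonneg i j) (hx_nonneg i)
  have hTΔ : ∑ i ∈ S, T i ≤ ∑ i ∈ S, Δ i := by
    rw [Finset.sum_add_distrib] at hsum0
    have : ∑ i ∈ S, (T i - Δ i) ≤ 0 := by linarith
    rw [Finset.sum_sub_distrib] at this
    linarith
  have hcard : (S.card : ℝ) ≤ ∑ i ∈ S, T i := by
    calc (S.card : ℝ) = ∑ _i ∈ S, (1:ℝ) := by simp
      _ ≤ ∑ i ∈ S, T i := Finset.sum_le_sum fun i _ => hT i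
  calc (S.card : ℝ) ≤ ∑ i ∈ S, T i := hcard
    _ ≤ ∑ i ∈ S, Δ i := hTΔ
    _ = ∑ i ∈ S, |Δ i| := Finset.sum_congr rfl fun i _ => (abs_of_nonneg (hΔ i)).symm
    _ ≤ ∑ i, |Δ i| := Finset.sum_le_sum_of_subset_of_nonneg (Finset.subset_univ S)
        (fun i _ _ => abs_nonneg _)
end

section
/- Start from x⁰ = 0 and mass vector m⁰ = Δ, and apply any finite sequence of valid push operations, where a push at node i is valid when m_i > T_i and it updates x_i ← x_i + (m_i−T_i)/w_i with w_i = Σ_{j∼i} w_{ij}, then adds (m_i−T_i)·w_{ij}/w_i to m_j for every neighbor j of i, and finally sets m_i ← T_i. Then every vector x^t produced by such a sequence of pushes satisfies supp(x^t) ⊆ supp(x*), where x* is the minimizer of the dual flow diffusion problem. -/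
/-- One valid push operation on a state `(x, m)`. -/
noncomputable def PushStep {n : ℕ} (w : Fin n → Fin n → ℝ) (T : Fin n → ℝ)
    (s t : (Fin n → ℝ) × (Fin n → ℝ)) : Prop :=
  ∃ i : Fin n, T i < s.2 i ∧
    t.1 = Function.update s.1 i (s.1 i + (s.2 i - T i) / (∑ j, w i j)) ∧
    t.2 = fun j => if j = i then T i
                   else s.2 j + (s.2 i - T i) * w i j / (∑ j', w i j')

lemma sum_update_apply {n : ℕ} (g : Fin n → ℝ → ℝ) (f : Fin n → ℝ) (i : Fin n) (v : ℝ) :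
    ∑ j, g j (Function.update f i v j) = (∑ j, g j (f j)) + (g i v - g i (f i)) := by
  have h1 : ∀ j, g j (Function.update f i v j)
      = g j (f j) + (if j = i then g i v - g i (f i) else 0) := by
    intro j
    by_cases h : j = i
    · subst h; simp
    · simp [Function.update_of_ne h, h]
  rw [Finset.sum_congr rfl (fun j _ => h1 j), Finset.sum_add_distrib]
  simp

lemma dual_expand {n : ℕ} (w : Fin n → Fin n → ℝ) (Δ T : Fin n → ℝ)
    (hsymm : ∀ i j, w i j = w j i) (hloop : ∀ i, w i i = 0)
    (xstar : Fin n → ℝ) (k : Fin n) (t : ℝ) :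
    dualObj w Δ T (Function.update xstar k (xstar k + t))
      = dualObj w Δ T xstar
        + t * ((∑ j, w k j * (xstar k - xstar j)) + (T k - Δ k))
        + t ^ 2 / 2 * (∑ j, w k j) := by
  set c : ℝ := xstar k + t with hc
  have hq1 : ∀ i, ∑ j, w i j * (Function.update xstar k c i - Function.update xstar k c j) ^ 2
      = (∑ j, w i j * (Function.update xstar k c i - xstar j) ^ 2)
        + (w i k * (Function.update xstar k c i - c) ^ 2
           - w i k * (Function.update xstar k c i - xstar k) ^ 2) := by
    intro i
    exact sum_update_apply (fun j y => w i j * (Function.update xstar k c i - y) ^ 2) xstar k c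
  have hq2 : ∑ i, ((∑ j, w i j * (Function.update xstar k c i - xstar j) ^ 2)
        + (w i k * (Function.update xstar k c i - c) ^ 2
           - w i k * (Function.update xstar k c i - xstar k) ^ 2))
      = (∑ i, ((∑ j, w i j * (xstar i - xstar j) ^ 2)
          + (w i k * (xstar i - c) ^ 2 - w i k * (xstar i - xstar k) ^ 2)))
        + ((((∑ j, w k j * (c - xstar j) ^ 2)
            + (w k k * (c - c) ^ 2 - w k k * (c - xstar k) ^ 2)))
          - (((∑ j, w k j * (xstar k - xstar j) ^ 2)
            + (w k k * (xstar k - c) ^ 2 - w k k * (xstar k - xstar k) ^ 2)))) :=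
    sum_update_apply (fun i y => (∑ j, w i j * (y - xstar j) ^ 2)
        + (w i k * (y - c) ^ 2 - w i k * (y - xstar k) ^ 2)) xstar k c
  have hq : ∑ i, ∑ j, w i j * (Function.update xstar k c i - Function.update xstar k c j) ^ 2
      = (∑ i, ∑ j, w i j * (xstar i - xstar j) ^ 2)
        + 2 * ∑ j, w k j * ((c - xstar j) ^ 2 - (xstar k - xstar j) ^ 2) := by
    rw [Finset.sum_congr rfl (fun i _ => hq1 i), hq2]
    have hcol : ∑ i, ((∑ j, w i j * (xstar i - xstar j) ^ 2)
          + (w i k * (xstar i - c) ^ 2 - w i k * (xstar i - xstar k) ^ 2))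
        = (∑ i, ∑ j, w i j * (xstar i - xstar j) ^ 2)
          + ∑ j, w k j * ((c - xstar j) ^ 2 - (xstar k - xstar j) ^ 2) := by
      rw [Finset.sum_add_distrib]
      congr 1
      apply Finset.sum_congr rfl
      intro i _
      rw [hsymm i k]
      ring
    rw [hcol]
    have hrow : ∑ j, w k j * ((c - xstar j) ^ 2 - (xstar k - xstar j) ^ 2)
        = (∑ j, w k j * (c - xstar j) ^ 2) - ∑ j, w k j * (xstar k - xstar j) ^ 2 := by
      rw [← Finset.sum_sub_distrib]
      apply Finset.sum_congr rfl
      intro j _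
      ring
    rw [hloop k, hrow]
    ring
  have hl : ∑ i, Function.update xstar k c i * (T i - Δ i)
      = (∑ i, xstar i * (T i - Δ i)) + (c * (T k - Δ k) - xstar k * (T k - Δ k)) :=
    sum_update_apply (fun i y => y * (T i - Δ i)) xstar k c
  have hpt : ∑ j, w k j * ((c - xstar j) ^ 2 - (xstar k - xstar j) ^ 2)
      = 2 * t * (∑ j, w k j * (xstar k - xstar j)) + t ^ 2 * (∑ j, w k j) := by
    rw [Finset.mul_sum, Finset.mul_sum, ← Finset.sum_add_distrib]
    apply Finset.sum_congr rfl
    intro j _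
    rw [hc]
    ring
  unfold dualObj
  rw [hq, hl, hpt, hc]
  ring

lemma kkt {n : ℕ} (w : Fin n → Fin n → ℝ) (Δ T : Fin n → ℝ)
    (hsymm : ∀ i j, w i j = w j i) (hnonneg : ∀ i j, 0 ≤ w i j)
    (hloop : ∀ i, w i i = 0)
    (xstar : Fin n → ℝ) (hx_nonneg : ∀ i, 0 ≤ xstar i)
    (hx_min : ∀ y : Fin n → ℝ, (∀ i, 0 ≤ y i) →
      dualObj w Δ T xstar ≤ dualObj w Δ T y) (k : Fin n) :
    0 ≤ (∑ j, w k j * (xstar k - xstar j)) + (T k - Δ k) := by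
  by_contra hg'
  push_neg at hg'
  set g : ℝ := (∑ j, w k j * (xstar k - xstar j)) + (T k - Δ k) with hgdef
  set S : ℝ := ∑ j, w k j with hSdef
  have hS : 0 ≤ S := Finset.sum_nonneg fun j _ => hnonneg k j
  have hS1 : (0:ℝ) < S + 1 := by linarith
  set t : ℝ := -g / (S + 1) with htdef
  have ht : 0 < t := div_pos (by linarith) hS1
  have hy : ∀ i, 0 ≤ Function.update xstar k (xstar k + t) i := by
    intro i
    by_cases h : i = k
    · subst h; simp only [Function.update_self]; linarith [hx_nonneg i]
    · rw [Function.update_of_ne h]; exact hx_nonneg i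
  have hmin := hx_min _ hy
  rw [dual_expand w Δ T hsymm hloop xstar k t] at hmin
  have h0 : 0 ≤ t * g + t ^ 2 / 2 * S := by linarith
  have h1 : t * (S + 1) = -g := div_mul_cancel₀ _ (ne_of_gt hS1)
  have h2 : t * S ≤ -g := by nlinarith
  nlinarith [mul_pos ht (show (0:ℝ) < -g by linarith),
    mul_le_mul_of_nonneg_left h2 (le_of_lt ht)]

theorem stmt1 {n : ℕ} (w : Fin n → Fin n → ℝ) (Δ T : Fin n → ℝ)
    (hsymm : ∀ i j, w i j = w j i)
    (hnonneg : ∀ i j, 0 ≤ w i j)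
    (hloop : ∀ i, w i i = 0)
    (hconn : ∀ i j : Fin n, Relation.ReflTransGen (fun a b => 0 < w a b) i j)
    (hΔ : ∀ i, 0 ≤ Δ i) (hT : ∀ i, 1 ≤ T i)
    (xstar : Fin n → ℝ)
    (hx_nonneg : ∀ i, 0 ≤ xstar i)
    (hx_min : ∀ y : Fin n → ℝ, (∀ i, 0 ≤ y i) →
      dualObj w Δ T xstar ≤ dualObj w Δ T y)
    (xt mt : Fin n → ℝ)
    (hreach : Relation.ReflTransGen (PushStep w T) ((fun _ => 0), Δ) (xt, mt)) :
    ∀ i, xt i ≠ 0 → xstar i ≠ 0 := by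
  have hkkt : ∀ k, 0 ≤ (∑ j, w k j * (xstar k - xstar j)) + (T k - Δ k) :=
    fun k => kkt w Δ T hsymm hnonneg hloop xstar hx_nonneg hx_min k
  have inv : ∀ p : (Fin n → ℝ) × (Fin n → ℝ),
      Relation.ReflTransGen (PushStep w T) ((fun _ => 0), Δ) p →
      ∀ k, 0 ≤ p.1 k ∧ p.1 k ≤ xstar k ∧ p.2 k ≤ Δ k - ∑ j, w k j * (p.1 k - p.1 j) := by
    intro p hp
    induction hp with
    | refl =>
      intro k
      refine ⟨le_refl 0, hx_nonneg k, ?_⟩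
      simp
    | @tail b q hab hbq ih =>
      obtain ⟨i, hTi, hx, hm⟩ := hbq
      obtain ⟨S, hSdef⟩ : ∃ x : ℝ, x = ∑ j, w i j := ⟨_, rfl⟩
      obtain ⟨δ, hδdef⟩ : ∃ x : ℝ, x = b.2 i - T i := ⟨_, rfl⟩
      rw [← hSdef, ← hδdef] at hx hm
      obtain ⟨v, hvdef⟩ : ∃ x : ℝ, x = b.1 i + δ / S := ⟨_, rfl⟩
      rw [← hvdef] at hx
      have hS0 : 0 ≤ S := hSdef ▸ Finset.sum_nonneg fun j _ => hnonneg i j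
      have hδ0 : 0 < δ := by rw [hδdef]; linarith
      have hdiv0 : 0 ≤ δ / S := div_nonneg (le_of_lt hδ0) hS0
      -- the key inequality : v ≤ xstar i
      have hvle : v ≤ xstar i := by
        rcases eq_or_lt_of_le hS0 with hS | hS
        · rw [hvdef, ← hS, div_zero, add_zero]; exact (ih i).2.1
        · have e1 : ∑ j, w i j * (b.1 i - b.1 j)
              = S * b.1 i - ∑ j, w i j * b.1 j := by
            simp only [mul_sub]
            rw [Finset.sum_sub_distrib, ← Finset.sum_mul, ← hSdef]
          have e2 : ∑ j, w i j * (xstar i - xstar j)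
              = S * xstar i - ∑ j, w i j * xstar j := by
            simp only [mul_sub]
            rw [Finset.sum_sub_distrib, ← Finset.sum_mul, ← hSdef]
          have e3 : ∑ j, w i j * b.1 j ≤ ∑ j, w i j * xstar j :=
            Finset.sum_le_sum fun j _ =>
              mul_le_mul_of_nonneg_left (ih j).2.1 (hnonneg i j)
          have hk := hkkt i
          rw [e2] at hk
          have hbm := (ih i).2.2
          rw [e1] at hbm
          have h4 : δ ≤ S * xstar i - S * b.1 i := by rw [hδdef]; linarith
          have h5 : δ / S ≤ xstar i - b.1 i := by
            rw [div_le_iff₀ hS]; nlinarith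
          rw [hvdef]; linarith
      intro k
      by_cases hk : k = i
      · subst hk
        have hq2k : q.2 k = T k := by rw [hm]; simp
        refine ⟨?_, ?_, ?_⟩
        · rw [hx, Function.update_self, hvdef]; linarith [(ih k).1]
        · rw [hx, Function.update_self]; exact hvle
        · -- mass bound at the pushed node
          rw [hq2k, hx]
          simp only [Function.update_self]
          have e4 : ∑ j, w k j * (v - Function.update b.1 k v j)
              = (∑ j, w k j * (v - b.1 j))
                + (w k k * (v - v) - w k k * (v - b.1 k)) :=
            sum_update_apply (fun j y => w k j * (v - y)) b.1 k v
          rw [hloop k] at e4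
          simp only [zero_mul, sub_zero, sub_self, add_zero] at e4
          have e5 : ∑ j, w k j * (v - b.1 j)
              = (∑ j, w k j * (b.1 k - b.1 j)) + (δ / S) * S := by
            rw [hSdef, Finset.mul_sum, ← Finset.sum_add_distrib]
            apply Finset.sum_congr rfl
            intro j _
            rw [hvdef, hSdef]
            ring
          have e6 : (δ / S) * S ≤ δ := by
            rcases eq_or_lt_of_le hS0 with h | h
            · rw [← h, mul_zero]; exact le_of_lt hδ0
            · rw [div_mul_cancel₀ _ (ne_of_gt h)]
          have hbm := (ih k).2.2
          rw [e4, e5]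
          have hδ' : δ = b.2 k - T k := hδdef
          linarith
      · have hq2k : q.2 k = b.2 k + δ * w i k / S := by rw [hm]; simp [hk]
        refine ⟨?_, ?_, ?_⟩
        · rw [hx, Function.update_of_ne hk]; exact (ih k).1
        · rw [hx, Function.update_of_ne hk]; exact (ih k).2.1
        · rw [hq2k, hx, Function.update_of_ne hk]
          have e7 : ∑ j, w k j * (b.1 k - Function.update b.1 i v j)
              = (∑ j, w k j * (b.1 k - b.1 j))
                + (w k i * (b.1 k - v) - w k i * (b.1 k - b.1 i)) :=
            sum_update_apply (fun j y => w k j * (b.1 k - y)) b.1 i v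
          have e8 : w k i * (b.1 k - v) - w k i * (b.1 k - b.1 i)
              = -(w k i * (δ / S)) := by
            rw [hvdef]; ring
          have e9 : δ * w i k / S = w k i * (δ / S) := by
            rw [hsymm i k]; ring
          have hbm := (ih k).2.2
          rw [e7, e8, e9]
          linarith
  intro i hne
  have h := inv (xt, mt) hreach i
  have h1 : 0 < xt i := lt_of_le_of_ne h.1 (Ne.symm hne)
  have h2 : 0 < xstar i := lt_of_lt_of_le h1 h.2.1
  exact ne_of_gt h2
end

section
/- If x* is a minimizer of the dual flow diffusion problem min_{x≥0} ½xᵀLx + xᵀ(T−Δ), then f* = −Bx* is feasible and optimal for the primal flow diffusion problem min_f ½fᵀWf subject to Δ + BᵀWf ≤ T, and the optimal primal value equals the negative of the optimal dual value (strong duality holds). -/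
/-!
STATEMENT 3. Flows are encoded as antisymmetric functions `f : V × V → ℝ` (with
`f i j` the flow variable on the oriented edge `(i,j)`, so `w i j * f i j` is the mass
moved from `i` to `j`; values on non-edges are irrelevant since `w i j = 0` there).
The primal objective `½ fᵀWf` becomes `¼ ∑ i ∑ j, w i j * (f i j)²` (each undirected
edge counted twice), and the feasibility constraint `Δ + BᵀWf ≤ T` becomes
`Δ i + ∑ j, w i j * f j i ≤ T i` for every node `i`.  If `x*` minimizes the dual
objective `½ xᵀLx + xᵀ(T − Δ)` over `x ≥ 0`, then `f* = −Bx*`, i.e.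
`f* i j = x* i − x* j`, is feasible and optimal for the primal problem, and the optimal
primal value equals the negative of the optimal dual value.
-/

/-- Swap the two summation indices using symmetry of `w`. -/
lemma fd_swap_lemma {n : ℕ} (w : Fin n → Fin n → ℝ) (hsymm : ∀ i j, w i j = w j i)
    (F : Fin n → Fin n → ℝ) :
    ∑ i, ∑ j, w i j * F i j = ∑ i, ∑ j, w i j * F j i := by
  rw [Finset.sum_comm]
  refine Finset.sum_congr rfl fun i _ => Finset.sum_congr rfl fun j _ => ?_
  rw [hsymm]

/-- The Laplacian bilinear form identity. -/
lemma fd_cross_lemma {n : ℕ} (w : Fin n → Fin n → ℝ) (hsymm : ∀ i j, w i j = w j i)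
    (x d : Fin n → ℝ) :
    ∑ i, d i * (∑ j, w i j * (x i - x j)) =
      (1/2) * ∑ i, ∑ j, w i j * ((x i - x j) * (d i - d j)) := by
  have h1 : ∑ i, ∑ j, w i j * ((x i - x j) * d j)
      = -∑ i, ∑ j, w i j * ((x i - x j) * d i) := by
    calc ∑ i, ∑ j, w i j * ((x i - x j) * d j)
        = ∑ i, ∑ j, w i j * ((x j - x i) * d i) := fd_swap_lemma w hsymm _
      _ = ∑ i, ∑ j, -(w i j * ((x i - x j) * d i)) :=
          Finset.sum_congr rfl fun i _ => Finset.sum_congr rfl fun j _ => by ring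
      _ = -∑ i, ∑ j, w i j * ((x i - x j) * d i) := by simp
  have h2 : ∑ i, ∑ j, w i j * ((x i - x j) * (d i - d j))
      = ∑ i, ∑ j, w i j * ((x i - x j) * d i) - ∑ i, ∑ j, w i j * ((x i - x j) * d j) := by
    rw [← Finset.sum_sub_distrib]
    refine Finset.sum_congr rfl fun i _ => ?_
    rw [← Finset.sum_sub_distrib]
    exact Finset.sum_congr rfl fun j _ => by ring
  have h3 : ∑ i, d i * (∑ j, w i j * (x i - x j))
      = ∑ i, ∑ j, w i j * ((x i - x j) * d i) := by
    refine Finset.sum_congr rfl fun i _ => ?_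
    rw [Finset.mul_sum]
    exact Finset.sum_congr rfl fun j _ => by ring
  rw [h2, h1, h3]; ring

lemma fd_aux_pos (g c : ℝ) (hc : 0 ≤ c)
    (h : ∀ t : ℝ, 0 ≤ t → 0 ≤ t * g + c * t ^ 2) : 0 ≤ g := by
  by_contra hg
  push_neg at hg
  have hc1 : (0:ℝ) < c + 1 := by linarith
  have ht : (0:ℝ) ≤ -g / (c + 1) := div_nonneg (by linarith) (by linarith)
  have := h _ ht
  have h2 : (-g / (c + 1)) * g + c * (-g / (c + 1)) ^ 2 = -g ^ 2 / (c + 1) ^ 2 := by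
    field_simp; ring
  rw [h2] at this
  have hgne : g ≠ 0 := ne_of_lt hg
  have h5 : 0 < g ^ 2 / (c + 1) ^ 2 := by positivity
  rw [neg_div] at this
  linarith

lemma fd_aux_comp (g c xi : ℝ) (hc : 0 ≤ c) (hxi : 0 ≤ xi) (hg : 0 ≤ g)
    (h : ∀ t : ℝ, 0 ≤ xi + t → 0 ≤ t * g + c * t ^ 2) : xi * g = 0 := by
  rcases eq_or_lt_of_le hxi with hx0 | hx0
  · rw [← hx0]; ring
  rcases eq_or_lt_of_le hg with hg0 | hg0
  · rw [← hg0]; ring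
  exfalso
  have hc1 : (0:ℝ) < c + 1 := by linarith
  set m : ℝ := min xi (g / (c + 1)) with hm
  have hm0 : 0 < m := lt_min hx0 (by positivity)
  have hm1 : m ≤ xi := min_le_left _ _
  have hm2 : m ≤ g / (c + 1) := min_le_right _ _
  have := h (-m) (by linarith)
  have h3 : c * m ≤ c * (g / (c + 1)) := mul_le_mul_of_nonneg_left hm2 hc
  have h4 : c * (g / (c + 1)) < g := by
    have heq : c * (g / (c + 1)) = g * c / (c + 1) := by ring
    rw [heq, div_lt_iff₀ hc1]
    nlinarith
  nlinarith

/-- Linear part of a single-coordinate perturbation. -/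
lemma fd_lin_pert {n : ℕ} (x : Fin n → ℝ) (G : Fin n → ℝ) (i : Fin n) (t : ℝ) :
    ∑ k, ((if k = i then x k + t else x k) - x k) * G k = t * G i := by
  have : ∀ k, ((if k = i then x k + t else x k) - x k) * G k
      = if k = i then t * G i else 0 := by
    intro k; split_ifs with h
    · subst h; ring
    · ring
  simp [this]

/-- Primal flow diffusion objective `½ fᵀWf` written with edge weights. -/
noncomputable def primalObj {n : ℕ} (w : Fin n → Fin n → ℝ)
    (f : Fin n → Fin n → ℝ) : ℝ :=
  (1 / 4) * ∑ i, ∑ j, w i j * (f i j) ^ 2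

/-- Primal feasibility: `f` is an antisymmetric flow satisfying `Δ + BᵀWf ≤ T`. -/
def PrimalFeasible {n : ℕ} (w : Fin n → Fin n → ℝ) (Δ T : Fin n → ℝ)
    (f : Fin n → Fin n → ℝ) : Prop :=
  (∀ i j, f i j = -f j i) ∧ ∀ i, Δ i + ∑ j, w i j * f j i ≤ T i

/-- Exact second-order Taylor expansion of the dual objective. -/
lemma fd_taylor_lemma {n : ℕ} (w : Fin n → Fin n → ℝ) (hsymm : ∀ i j, w i j = w j i)
    (Δ T x y : Fin n → ℝ) :
    dualObj w Δ T y = dualObj w Δ T x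
      + (∑ i, (y i - x i) * ((∑ j, w i j * (x i - x j)) + (T i - Δ i)))
      + (1/4) * ∑ i, ∑ j, w i j * ((y i - x i) - (y j - x j)) ^ 2 := by
  have hsplit : ∑ i, ∑ j, w i j * (y i - y j) ^ 2
      = (∑ i, ∑ j, w i j * (x i - x j) ^ 2)
        + (∑ i, ∑ j, w i j * ((y i - x i) - (y j - x j)) ^ 2)
        + 2 * ∑ i, ∑ j, w i j * ((x i - x j) * ((y i - x i) - (y j - x j))) := by
    calc ∑ i, ∑ j, w i j * (y i - y j) ^ 2
        = ∑ i, ∑ j, (w i j * (x i - x j) ^ 2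
            + w i j * ((y i - x i) - (y j - x j)) ^ 2
            + 2 * (w i j * ((x i - x j) * ((y i - x i) - (y j - x j))))) :=
          Finset.sum_congr rfl fun i _ => Finset.sum_congr rfl fun j _ => by ring
      _ = _ := by simp [Finset.sum_add_distrib, ← Finset.mul_sum]
  have hc := fd_cross_lemma w hsymm x (fun i => y i - x i)
  have hsplit2 : ∑ i, (y i - x i) * ((∑ j, w i j * (x i - x j)) + (T i - Δ i))
      = (∑ i, (y i - x i) * (∑ j, w i j * (x i - x j)))
        + ∑ i, (y i - x i) * (T i - Δ i) := by
    rw [← Finset.sum_add_distrib]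
    exact Finset.sum_congr rfl fun i _ => by ring
  have hlin : ∑ i, y i * (T i - Δ i)
      = ∑ i, x i * (T i - Δ i) + ∑ i, (y i - x i) * (T i - Δ i) := by
    rw [← Finset.sum_add_distrib]
    exact Finset.sum_congr rfl fun i _ => by ring
  simp only [dualObj]
  rw [hsplit, hsplit2, hlin, hc]
  ring

/-- Quadratic part of a single-coordinate perturbation. -/
lemma fd_quad_pert {n : ℕ} (w : Fin n → Fin n → ℝ) (hsymm : ∀ i j, w i j = w j i)
    (hloop : ∀ i, w i i = 0) (x : Fin n → ℝ) (i : Fin n) (t : ℝ) :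
    ∑ a, ∑ b, w a b * (((if a = i then x a + t else x a) - x a)
        - ((if b = i then x b + t else x b) - x b)) ^ 2
      = 2 * t ^ 2 * ∑ j, w i j := by
  have key : ∀ a b, w a b * (((if a = i then x a + t else x a) - x a)
        - ((if b = i then x b + t else x b) - x b)) ^ 2
      = ((if a = i then t^2 * w i b else 0) + (if b = i then t^2 * w a i else 0))
        - (if a = i then (if b = i then 2 * t^2 * w i i else 0) else 0) := by
    intro a b
    split_ifs with h1 h2 h2 <;> subst_vars <;> ring
  simp only [key, Finset.sum_sub_distrib, Finset.sum_add_distrib,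
    Finset.sum_ite_irrel, Finset.sum_ite_eq', Finset.mem_univ, if_true,
    Finset.sum_const_zero, hloop]
  have : ∑ a, w a i = ∑ a, w i a :=
    Finset.sum_congr rfl fun a _ => (hsymm a i)
  simp only [← Finset.mul_sum]
  rw [this]; ring

theorem stmt3 {n : ℕ} (w : Fin n → Fin n → ℝ) (Δ T : Fin n → ℝ)
    (hsymm : ∀ i j, w i j = w j i)
    (hnonneg : ∀ i j, 0 ≤ w i j)
    (hloop : ∀ i, w i i = 0)
    (hconn : ∀ i j : Fin n, Relation.ReflTransGen (fun a b => 0 < w a b) i j)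
    (hΔ : ∀ i, 0 ≤ Δ i) (hT : ∀ i, 1 ≤ T i)
    (xstar : Fin n → ℝ)
    (hx_nonneg : ∀ i, 0 ≤ xstar i)
    (hx_min : ∀ y : Fin n → ℝ, (∀ i, 0 ≤ y i) →
      dualObj w Δ T xstar ≤ dualObj w Δ T y) :
    PrimalFeasible w Δ T (fun i j => xstar i - xstar j) ∧
    (∀ f : Fin n → Fin n → ℝ, PrimalFeasible w Δ T f →
      primalObj w (fun i j => xstar i - xstar j) ≤ primalObj w f) ∧
    primalObj w (fun i j => xstar i - xstar j) = -(dualObj w Δ T xstar) := by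
  -- the gradient of the dual objective
  set G : Fin n → ℝ :=
    fun k => (∑ j, w k j * (xstar k - xstar j)) + (T k - Δ k) with hG
  -- KKT conditions
  have hKKT : ∀ i, 0 ≤ G i ∧ xstar i * G i = 0 := by
    intro i
    have hS : 0 ≤ ∑ j, w i j := Finset.sum_nonneg fun j _ => hnonneg i j
    have hpert : ∀ t : ℝ, 0 ≤ xstar i + t →
        0 ≤ t * G i + ((∑ j, w i j) / 2) * t ^ 2 := by
      intro t ht
      set y : Fin n → ℝ := fun k => if k = i then xstar k + t else xstar k with hy
      have hynn : ∀ k, 0 ≤ y k := by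
        intro k; simp only [hy]
        split_ifs with h
        · subst h; exact ht
        · exact hx_nonneg k
      have hmin := hx_min y hynn
      have htay := fd_taylor_lemma w hsymm Δ T xstar y
      have hA : ∑ k, (y k - xstar k) * ((∑ j, w k j * (xstar k - xstar j)) + (T k - Δ k))
          = t * G i := fd_lin_pert xstar G i t
      have hB : ∑ a, ∑ b, w a b * ((y a - xstar a) - (y b - xstar b)) ^ 2
          = 2 * t ^ 2 * ∑ j, w i j := fd_quad_pert w hsymm hloop xstar i t
      rw [htay, hA, hB] at hmin
      nlinarith [hmin]
    constructor
    · exact fd_aux_pos (G i) _ (by positivity)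
        (fun t ht => hpert t (by linarith [hx_nonneg i]))
    · exact fd_aux_comp (G i) _ (xstar i) (by positivity) (hx_nonneg i)
        (fd_aux_pos (G i) _ (by positivity)
          (fun t ht => hpert t (by linarith [hx_nonneg i]))) hpert
  -- abbreviation for the Dirichlet energy
  set A : ℝ := ∑ i, ∑ j, w i j * (xstar i - xstar j) ^ 2 with hA
  -- complementary slackness gives ½A + ∑ x(T-Δ) = 0
  have hcs : ∑ i, xstar i * G i = 0 :=
    Finset.sum_eq_zero fun i _ => (hKKT i).2
  have hsplitG : ∑ i, xstar i * G i
      = (∑ i, xstar i * (∑ j, w i j * (xstar i - xstar j)))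
        + ∑ i, xstar i * (T i - Δ i) := by
    rw [← Finset.sum_add_distrib]
    exact Finset.sum_congr rfl fun i _ => by simp only [hG]; ring
  have hcross := fd_cross_lemma w hsymm xstar xstar
  have hsq : ∑ i, ∑ j, w i j * ((xstar i - xstar j) * (xstar i - xstar j)) = A := by
    rw [hA]
    exact Finset.sum_congr rfl fun i _ => Finset.sum_congr rfl fun j _ => by ring
  have hkey : (1/2) * A + ∑ i, xstar i * (T i - Δ i) = 0 := by
    rw [hsplitG] at hcs
    rw [hcross, hsq] at hcs
    linarith
  -- primal value of f*
  have hprim : primalObj w (fun i j => xstar i - xstar j) = (1/4) * A := by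
    simp only [primalObj, hA]
  have hdual : dualObj w Δ T xstar = -((1/4) * A) := by
    simp only [dualObj, ← hA]
    linarith
  refine ⟨⟨fun i j => by ring, fun i => ?_⟩, fun f hf => ?_, by rw [hprim, hdual]; ring⟩
  · -- feasibility
    have h0 := (hKKT i).1
    simp only [hG] at h0
    have hneg : ∑ j, w i j * (xstar j - xstar i)
        = -∑ j, w i j * (xstar i - xstar j) := by
      rw [← Finset.sum_neg_distrib]
      exact Finset.sum_congr rfl fun j _ => by ring
    simp only
    linarith
  · -- optimality against any feasible f
    obtain ⟨hanti, hfeas⟩ := hf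
    have h1 : ∑ i, xstar i * (∑ j, w i j * f j i) ≤ ∑ i, xstar i * (T i - Δ i) :=
      Finset.sum_le_sum fun i _ =>
        mul_le_mul_of_nonneg_left (by linarith [hfeas i]) (hx_nonneg i)
    have h2 : ∑ i, xstar i * (∑ j, w i j * f j i)
        = ∑ i, ∑ j, w i j * (xstar i * f j i) := by
      refine Finset.sum_congr rfl fun i _ => ?_
      rw [Finset.mul_sum]
      exact Finset.sum_congr rfl fun j _ => by ring
    have h3 : ∑ i, ∑ j, w i j * (xstar i * f j i)
        = -∑ i, ∑ j, w i j * (xstar j * f j i) := by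
      calc ∑ i, ∑ j, w i j * (xstar i * f j i)
          = ∑ i, ∑ j, w i j * (xstar j * f i j) :=
            fd_swap_lemma w hsymm (fun i j => xstar i * f j i)
        _ = ∑ i, ∑ j, -(w i j * (xstar j * f j i)) :=
            Finset.sum_congr rfl fun i _ => Finset.sum_congr rfl fun j _ => by
              rw [hanti i j]; ring
        _ = -∑ i, ∑ j, w i j * (xstar j * f j i) := by simp
    have h4 : ∑ i, ∑ j, w i j * ((xstar i - xstar j) * f j i)
        = 2 * ∑ i, ∑ j, w i j * (xstar i * f j i) := by
      have hsplit : ∑ i, ∑ j, w i j * ((xstar i - xstar j) * f j i)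
          = ∑ i, ∑ j, w i j * (xstar i * f j i)
            - ∑ i, ∑ j, w i j * (xstar j * f j i) := by
        rw [← Finset.sum_sub_distrib]
        refine Finset.sum_congr rfl fun i _ => ?_
        rw [← Finset.sum_sub_distrib]
        exact Finset.sum_congr rfl fun j _ => by ring
      rw [hsplit]
      linarith [h3]
    have h5 : (0:ℝ) ≤ ∑ i, ∑ j, w i j * (f j i + (xstar i - xstar j)) ^ 2 :=
      Finset.sum_nonneg fun i _ => Finset.sum_nonneg fun j _ =>
        mul_nonneg (hnonneg i j) (sq_nonneg _)
    have h6 : ∑ i, ∑ j, w i j * (f j i + (xstar i - xstar j)) ^ 2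
        = (∑ i, ∑ j, w i j * (f j i) ^ 2) + A
          + 2 * ∑ i, ∑ j, w i j * ((xstar i - xstar j) * f j i) := by
      rw [hA]
      calc ∑ i, ∑ j, w i j * (f j i + (xstar i - xstar j)) ^ 2
          = ∑ i, ∑ j, (w i j * (f j i) ^ 2 + w i j * (xstar i - xstar j) ^ 2
              + 2 * (w i j * ((xstar i - xstar j) * f j i))) :=
            Finset.sum_congr rfl fun i _ => Finset.sum_congr rfl fun j _ => by ring
        _ = _ := by simp [Finset.sum_add_distrib, ← Finset.mul_sum]
    have h7 : ∑ i, ∑ j, w i j * (f j i) ^ 2 = ∑ i, ∑ j, w i j * (f i j) ^ 2 :=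
      fd_swap_lemma w hsymm (fun i j => (f j i) ^ 2)
    have hD : ∑ i, ∑ j, w i j * (xstar i * f j i) ≤ -(1/2) * A := by
      rw [← h2]; linarith
    simp only [primalObj, ← hA]
    linarith
end

section
/- Let x* be a minimizer of the dual flow diffusion problem and set f* = −Bx*. Then complementary slackness holds: for every node i, if x*_i > 0 then Δ_i + [BᵀWf*]_i = T_i; equivalently, x*_i > 0 implies (Δ − Lx*)_i = T_i, i.e., node i is saturated at exactly its sink capacity. -/
lemma dualObj_perturb {n : ℕ} (w : Fin n → Fin n → ℝ) (Δ T : Fin n → ℝ)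
    (hsymm : ∀ i j, w i j = w j i) (hloop : ∀ i, w i i = 0)
    (xstar : Fin n → ℝ) (i : Fin n) (t : ℝ) :
    dualObj w Δ T (fun k => xstar k + (if k = i then t else 0)) =
      dualObj w Δ T xstar
        + ((∑ j, w i j * (xstar i - xstar j)) + (T i - Δ i)) * t
        + ((∑ j, w i j) / 2) * t ^ 2 := by
  unfold dualObj
  have h1 : ∀ a b : Fin n,
      w a b * ((xstar a + (if a = i then t else 0)) - (xstar b + (if b = i then t else 0))) ^ 2
      = w a b * (xstar a - xstar b) ^ 2
        + (if a = i then 2 * (w a b * (xstar a - xstar b)) * t else 0)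
        - (if b = i then 2 * (w a b * (xstar a - xstar b)) * t else 0)
        + (if a = i then w a b * t ^ 2 else 0)
        + (if b = i then w a b * t ^ 2 else 0)
        - (if a = i then (if b = i then 2 * w a b * t ^ 2 else 0) else 0) := by
    intro a b
    by_cases ha : a = i <;> by_cases hb : b = i <;> simp [ha, hb] <;> ring
  simp only [h1, add_mul, ite_mul, zero_mul, Finset.sum_add_distrib, Finset.sum_sub_distrib,
    Finset.sum_ite_eq', Finset.mem_univ, if_true]
  have h4 : ∀ f : Fin n → Fin n → ℝ,
      (∑ x : Fin n, ∑ x1 : Fin n, if x = i then f x x1 else 0) = ∑ x1, f i x1 := by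
    intro f; rw [Finset.sum_comm]; simp [Finset.sum_ite_eq']
  simp only [h4, ite_mul, zero_mul, Finset.sum_ite_eq', Finset.mem_univ, if_true, hloop,
    mul_zero, zero_mul]
  have h2' : ∑ x : Fin n, 2 * (w x i * (xstar x - xstar i)) * t
      = -(2 * t * ∑ j, w i j * (xstar i - xstar j)) := by
    rw [Finset.mul_sum, ← Finset.sum_neg_distrib]
    exact Finset.sum_congr rfl fun b _ => by rw [hsymm b i]; ring
  have h3' : ∑ x : Fin n, w x i * t ^ 2 = (∑ j, w i j) * t ^ 2 := by
    rw [Finset.sum_mul]; exact Finset.sum_congr rfl fun b _ => by rw [hsymm b i]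
  have h5 : ∑ x1 : Fin n, 2 * (w i x1 * (xstar i - xstar x1)) * t
      = 2 * t * ∑ j, w i j * (xstar i - xstar j) := by
    rw [Finset.mul_sum]; exact Finset.sum_congr rfl fun b _ => by ring
  have h6 : ∑ x1 : Fin n, w i x1 * t ^ 2 = (∑ j, w i j) * t ^ 2 := by
    rw [Finset.sum_mul]
  rw [h2', h3', h5, h6]
  ring

theorem stmt4 {n : ℕ} (w : Fin n → Fin n → ℝ) (Δ T : Fin n → ℝ)
    (hsymm : ∀ i j, w i j = w j i)
    (hnonneg : ∀ i j, 0 ≤ w i j)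
    (hloop : ∀ i, w i i = 0)
    (hconn : ∀ i j : Fin n, Relation.ReflTransGen (fun a b => 0 < w a b) i j)
    (hΔ : ∀ i, 0 ≤ Δ i) (hT : ∀ i, 1 ≤ T i)
    (xstar : Fin n → ℝ)
    (hx_nonneg : ∀ i, 0 ≤ xstar i)
    (hx_min : ∀ y : Fin n → ℝ, (∀ i, 0 ≤ y i) →
      dualObj w Δ T xstar ≤ dualObj w Δ T y) :
    ∀ i, 0 < xstar i →
      Δ i - ∑ j, w i j * (xstar i - xstar j) = T i := by
  intro i hxi
  set G0 := ∑ j, w i j * (xstar i - xstar j) with hG0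
  set C := ∑ j, w i j with hCdef
  set g := G0 + (T i - Δ i) with hgdef
  have hC : 0 ≤ C := Finset.sum_nonneg fun j _ => hnonneg i j
  have hmin' : ∀ t : ℝ, -xstar i ≤ t → 0 ≤ g * t + (C / 2) * t ^ 2 := by
    intro t ht
    have hy : ∀ k, 0 ≤ xstar k + (if k = i then t else 0) := by
      intro k
      by_cases hk : k = i
      · simp [hk]; linarith
      · simp [hk]; exact hx_nonneg k
    have h := hx_min _ hy
    rw [dualObj_perturb w Δ T hsymm hloop xstar i t] at h
    linarith
  clear_value G0 C g
  have hg : g = 0 := by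
    by_contra hg
    have habs : 0 < |g| := abs_pos.mpr hg
    set s := min (xstar i / |g|) (1 / (C + 1)) with hsdef
    have hs : 0 < s := lt_min (div_pos hxi habs) (by positivity)
    have hts : |g| * s ≤ xstar i := by
      have h1 : s ≤ xstar i / |g| := min_le_left _ _
      calc |g| * s ≤ |g| * (xstar i / |g|) := by nlinarith
        _ = xstar i := by field_simp
    have ht : -xstar i ≤ -g * s := by
      nlinarith [le_abs_self g, neg_abs_le g]
    have h0 := hmin' (-g * s) ht
    have hsle : s ≤ 1 / (C + 1) := min_le_right _ _
    have hmul : s * (C + 1) ≤ 1 := by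
      rw [← le_div_iff₀ (by linarith)]; exact hsle
    have hg2 : 0 < g ^ 2 := by positivity
    have hkey : (g ^ 2 * s) * (s * (C + 1)) ≤ (g ^ 2 * s) * 1 :=
      mul_le_mul_of_nonneg_left hmul (le_of_lt (mul_pos hg2 hs))
    nlinarith [hkey, mul_pos hg2 hs, mul_pos (mul_pos hg2 hs) hs]
  linarith [hg]
end

section
/- Let x* be a minimizer of the dual flow diffusion problem with total source mass ‖Δ‖₁. Then for every edge (i,j) ∈ E, the amount of mass routed over that edge by the optimal flow f* = −Bx* is at most the total source mass: w_{ij}·|x*_i − x*_j| ≤ ‖Δ‖₁. -/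
lemma dualObj_update {n : ℕ} (w : Fin n → Fin n → ℝ) (Δ T : Fin n → ℝ)
    (hsymm : ∀ i j, w i j = w j i) (hloop : ∀ i, w i i = 0)
    (x : Fin n → ℝ) (k : Fin n) (t : ℝ) :
    dualObj w Δ T (fun l => x l + (if l = k then t else 0)) =
      dualObj w Δ T x + t * ((∑ l, w k l * (x k - x l)) + (T k - Δ k))
        + t ^ 2 * ((∑ l, w k l) / 2) := by
  have hquad : ∑ i, ∑ j, w i j * ((x i + (if i = k then t else 0))
        - (x j + (if j = k then t else 0))) ^ 2
      = ∑ i, ∑ j, (w i j * (x i - x j) ^ 2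
          + ((if i = k then 2*t*(w k j*(x k - x j)) + t^2 * w k j else 0)
            + (if j = k then 2*t*(w i k*(x k - x i)) + t^2 * w i k else 0))) := by
    refine Finset.sum_congr rfl fun i _ => Finset.sum_congr rfl fun j _ => ?_
    by_cases hi : i = k <;> by_cases hj : j = k
    · subst hi; subst hj; simp [hloop]
    · subst hi; simp only [if_true, if_neg hj]; ring
    · subst hj; simp only [if_true, if_neg hi]; ring
    · simp only [if_neg hi, if_neg hj]; ring
  have h2 : ∀ i : Fin n,
      ∑ j, (if i = k then 2*t*(w k j*(x k - x j)) + t^2 * w k j else 0)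
      = (if i = k then 2*t*(∑ j, w k j*(x k - x j)) + t^2 * ∑ j, w k j else 0) := by
    intro i
    by_cases hi : i = k <;> simp [hi, Finset.sum_add_distrib, Finset.mul_sum]
  have h3 : ∀ i : Fin n,
      ∑ j, (if j = k then 2*t*(w i k*(x k - x i)) + t^2 * w i k else 0)
      = 2*t*(w k i*(x k - x i)) + t^2 * w k i := by
    intro i
    rw [Finset.sum_ite_eq' Finset.univ k
      (fun _ => 2*t*(w i k*(x k - x i)) + t^2 * w i k)]
    simp [hsymm i k]
  have hlin : ∑ i, (x i + (if i = k then t else 0)) * (T i - Δ i)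
      = (∑ i, x i * (T i - Δ i)) + t * (T k - Δ k) := by
    have : ∀ i : Fin n, (x i + (if i = k then t else 0)) * (T i - Δ i)
        = x i * (T i - Δ i) + (if i = k then t * (T k - Δ k) else 0) := by
      intro i; by_cases hi : i = k <;> simp [hi] <;> ring
    rw [Finset.sum_congr rfl fun i _ => this i, Finset.sum_add_distrib,
      Finset.sum_ite_eq' Finset.univ k (fun _ => t * (T k - Δ k))]
    simp
  have h4a : ∑ i, 2*t*(w k i*(x k - x i)) = 2*t*(∑ l, w k l * (x k - x l)) :=
    (Finset.mul_sum _ _ _).symm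
  have h4b : ∑ i : Fin n, t^2 * w k i = t^2 * (∑ l, w k l) :=
    (Finset.mul_sum _ _ _).symm
  simp only [dualObj, hquad, hlin, Finset.sum_add_distrib, h2, h3,
    Finset.sum_ite_eq' Finset.univ k, Finset.mem_univ, if_true, h4a, h4b]
  ring

lemma grad_le {n : ℕ} (w : Fin n → Fin n → ℝ) (Δ T : Fin n → ℝ)
    (hsymm : ∀ i j, w i j = w j i) (hnonneg : ∀ i j, 0 ≤ w i j)
    (hloop : ∀ i, w i i = 0)
    (xstar : Fin n → ℝ) (hx_nonneg : ∀ i, 0 ≤ xstar i)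
    (hx_min : ∀ y : Fin n → ℝ, (∀ i, 0 ≤ y i) →
      dualObj w Δ T xstar ≤ dualObj w Δ T y)
    (k : Fin n) (hk : 0 < xstar k) :
    (∑ l, w k l * (xstar k - xstar l)) ≤ Δ k - T k := by
  set g : ℝ := (∑ l, w k l * (xstar k - xstar l)) + (T k - Δ k) with hg
  set c : ℝ := (∑ l, w k l) / 2 with hc
  have hc0 : 0 ≤ c := by
    have : (0:ℝ) ≤ ∑ l, w k l := Finset.sum_nonneg fun l _ => hnonneg k l
    positivity
  suffices hgle : g ≤ 0 by rw [hg] at hgle; linarith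
  by_contra hcon
  push_neg at hcon
  set ε : ℝ := min (xstar k) (g / (c + 1)) with hε
  have hεpos : 0 < ε := lt_min hk (div_pos hcon (by linarith))
  have hεk : ε ≤ xstar k := min_le_left _ _
  have hy : ∀ i, 0 ≤ xstar i + (if i = k then -ε else 0) := by
    intro i
    by_cases hi : i = k
    · subst hi; simp; linarith
    · simp [hi, hx_nonneg i]
  have hmin := hx_min _ hy
  rw [dualObj_update w Δ T hsymm hloop xstar k (-ε)] at hmin
  rw [neg_sq, ← hg, ← hc] at hmin
  have h1 : g ≤ ε * c := by nlinarith
  have h2 : ε * c ≤ (g / (c + 1)) * c :=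
    mul_le_mul_of_nonneg_right (min_le_right _ _) hc0
  have h3 : (g / (c + 1)) * c < g := by
    rw [div_mul_eq_mul_div, div_lt_iff₀ (by linarith : (0:ℝ) < c + 1)]
    nlinarith
  linarith

lemma key_bound {n : ℕ} (w : Fin n → Fin n → ℝ) (Δ T : Fin n → ℝ)
    (hsymm : ∀ i j, w i j = w j i) (hnonneg : ∀ i j, 0 ≤ w i j)
    (hloop : ∀ i, w i i = 0)
    (hΔ : ∀ i, 0 ≤ Δ i) (hT : ∀ i, 1 ≤ T i)
    (xstar : Fin n → ℝ) (hx_nonneg : ∀ i, 0 ≤ xstar i)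
    (hx_min : ∀ y : Fin n → ℝ, (∀ i, 0 ≤ y i) →
      dualObj w Δ T xstar ≤ dualObj w Δ T y)
    (i j : Fin n) (hw : 0 < w i j) (hij : xstar j ≤ xstar i) :
    w i j * (xstar i - xstar j) ≤ ∑ i', |Δ i'| := by
  have habs : (0:ℝ) ≤ ∑ i', |Δ i'| := Finset.sum_nonneg fun l _ => abs_nonneg _
  rcases eq_or_lt_of_le hij with heq | hlt
  · rw [← heq]; simpa using habs
  set S : Finset (Fin n) := Finset.univ.filter (fun k => xstar i ≤ xstar k) with hS
  have hiS : i ∈ S := by simp [hS]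
  have hjS : j ∈ Sᶜ := by simp [hS]; linarith
  have hposS : ∀ k ∈ S, 0 < xstar k := by
    intro k hk
    rw [hS, Finset.mem_filter] at hk
    have := hx_nonneg j
    linarith [hk.2]
  have hterm : ∀ k ∈ S, ∀ l ∈ Sᶜ, 0 ≤ w k l * (xstar k - xstar l) := by
    intro k hk l hl
    rw [hS, Finset.mem_filter] at hk
    rw [Finset.mem_compl, hS, Finset.mem_filter] at hl
    have hl' : xstar l < xstar i := by
      by_contra h
      exact hl ⟨Finset.mem_univ l, le_of_not_gt h⟩
    have : 0 ≤ xstar k - xstar l := by linarith [hk.2]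
    exact mul_nonneg (hnonneg k l) this
  -- step 1 : single edge ≤ cross-boundary sum
  have step1 : w i j * (xstar i - xstar j)
      ≤ ∑ k ∈ S, ∑ l ∈ Sᶜ, w k l * (xstar k - xstar l) := by
    have h1 : w i j * (xstar i - xstar j)
        ≤ ∑ l ∈ Sᶜ, w i l * (xstar i - xstar l) :=
      Finset.single_le_sum (fun l hl => hterm i hiS l hl) hjS
    have h2 : ∑ l ∈ Sᶜ, w i l * (xstar i - xstar l)
        ≤ ∑ k ∈ S, ∑ l ∈ Sᶜ, w k l * (xstar k - xstar l) :=
      Finset.single_le_sum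
        (fun k hk => Finset.sum_nonneg fun l hl => hterm k hk l hl) hiS
    linarith
  -- step 2 : cross-boundary sum equals full row sums over S
  have hzero : ∑ k ∈ S, ∑ l ∈ S, w k l * (xstar k - xstar l) = 0 := by
    have hneg : ∑ k ∈ S, ∑ l ∈ S, w k l * (xstar k - xstar l)
        = - ∑ k ∈ S, ∑ l ∈ S, w k l * (xstar k - xstar l) := by
      conv_lhs => rw [Finset.sum_comm]
      rw [← Finset.sum_neg_distrib]
      refine Finset.sum_congr rfl fun l _ => ?_
      rw [← Finset.sum_neg_distrib]
      refine Finset.sum_congr rfl fun k _ => ?_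
      rw [hsymm k l]; ring
    linarith
  have step2 : ∑ k ∈ S, ∑ l ∈ Sᶜ, w k l * (xstar k - xstar l)
      = ∑ k ∈ S, ∑ l, w k l * (xstar k - xstar l) := by
    have hdecomp : ∀ k : Fin n, ∑ l ∈ Sᶜ, w k l * (xstar k - xstar l)
        = (∑ l, w k l * (xstar k - xstar l)) - ∑ l ∈ S, w k l * (xstar k - xstar l) := by
      intro k
      rw [← Finset.sum_add_sum_compl S (fun l => w k l * (xstar k - xstar l))]
      ring
    rw [Finset.sum_congr rfl fun k _ => hdecomp k, Finset.sum_sub_distrib, hzero]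
    ring
  have step3 : ∑ k ∈ S, ∑ l, w k l * (xstar k - xstar l) ≤ ∑ k ∈ S, (Δ k - T k) :=
    Finset.sum_le_sum fun k hk =>
      grad_le w Δ T hsymm hnonneg hloop xstar hx_nonneg hx_min k (hposS k hk)
  have step4 : ∑ k ∈ S, (Δ k - T k) ≤ ∑ k ∈ S, |Δ k| :=
    Finset.sum_le_sum fun k _ => by
      have := hT k; have := le_abs_self (Δ k); linarith
  have step5 : ∑ k ∈ S, |Δ k| ≤ ∑ i', |Δ i'| :=
    Finset.sum_le_sum_of_subset_of_nonneg (Finset.subset_univ S)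
      (fun k _ _ => abs_nonneg _)
  linarith

theorem stmt5 {n : ℕ} (w : Fin n → Fin n → ℝ) (Δ T : Fin n → ℝ)
    (hsymm : ∀ i j, w i j = w j i)
    (hnonneg : ∀ i j, 0 ≤ w i j)
    (hloop : ∀ i, w i i = 0)
    (hconn : ∀ i j : Fin n, Relation.ReflTransGen (fun a b => 0 < w a b) i j)
    (hΔ : ∀ i, 0 ≤ Δ i) (hT : ∀ i, 1 ≤ T i)
    (xstar : Fin n → ℝ)
    (hx_nonneg : ∀ i, 0 ≤ xstar i)
    (hx_min : ∀ y : Fin n → ℝ, (∀ i, 0 ≤ y i) →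
      dualObj w Δ T xstar ≤ dualObj w Δ T y) :
    ∀ i j, 0 < w i j → w i j * |xstar i - xstar j| ≤ ∑ i', |Δ i'| := by
  intro i j hw
  rcases le_total (xstar j) (xstar i) with h | h
  · rw [abs_of_nonneg (by linarith : (0:ℝ) ≤ xstar i - xstar j)]
    exact key_bound w Δ T hsymm hnonneg hloop hΔ hT xstar hx_nonneg hx_min i j hw h
  · rw [abs_sub_comm, abs_of_nonneg (by linarith : (0:ℝ) ≤ xstar j - xstar i),
      hsymm i j]
    exact key_bound w Δ T hsymm hnonneg hloop hΔ hT xstar hx_nonneg hx_min j i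
      (hsymm i j ▸ hw) h
end

section
/- Let x* be a minimizer of the dual flow diffusion problem. Then for every subset S ⊆ V, the net amount of mass that the optimal flow f* = −Bx* routes out of S is at most the source mass initially placed in S: Σ_{i∈S, j∉S, (i,j)∈E} w_{ij}(x*_i − x*_j) ≤ Σ_{i∈S} Δ_i. -/
lemma pull_ite {n : ℕ} (i : Fin n) (f : Fin n → Fin n → ℝ) :
    ∑ a : Fin n, ∑ b : Fin n, (if a = i then f a b else 0) = ∑ b : Fin n, f i b := by
  have h : ∀ a : Fin n, (∑ b : Fin n, if a = i then f a b else 0)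
      = if a = i then ∑ b : Fin n, f a b else 0 := by
    intro a; split <;> simp
  simp [h]

lemma expand_var {n : ℕ} (w : Fin n → Fin n → ℝ) (Δ T : Fin n → ℝ)
    (hsymm : ∀ i j, w i j = w j i) (hloop : ∀ i, w i i = 0)
    (x : Fin n → ℝ) (i : Fin n) (t : ℝ) :
    dualObj w Δ T (fun j => x j + if j = i then t else 0)
      = dualObj w Δ T x + t * (∑ j, w i j * (x i - x j) + (T i - Δ i))
        + t ^ 2 / 2 * ∑ j, w i j := by
  unfold dualObj
  have key : ∀ a b : Fin n,
      w a b * ((x a + (if a = i then t else 0)) - (x b + (if b = i then t else 0))) ^ 2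
      = w a b * (x a - x b) ^ 2
        + (if a = i then 2 * t * (w a b * (x a - x b)) else 0)
        - (if b = i then 2 * t * (w a b * (x a - x b)) else 0)
        + (if a = i then t ^ 2 * w a b else 0)
        + (if b = i then t ^ 2 * w a b else 0)
        - (if a = i then (if b = i then 2 * t ^ 2 * w a b else 0) else 0) := by
    intro a b; by_cases ha : a = i <;> by_cases hb : b = i <;> simp [ha, hb] <;> ring
  have hsplit : ∑ a : Fin n, ∑ b : Fin n,
      w a b * ((x a + (if a = i then t else 0)) - (x b + (if b = i then t else 0))) ^ 2
      = (∑ a : Fin n, ∑ b : Fin n, w a b * (x a - x b) ^ 2)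
        + (∑ a : Fin n, ∑ b : Fin n, (if a = i then 2 * t * (w a b * (x a - x b)) else 0))
        - (∑ a : Fin n, ∑ b : Fin n, (if b = i then 2 * t * (w a b * (x a - x b)) else 0))
        + (∑ a : Fin n, ∑ b : Fin n, (if a = i then t ^ 2 * w a b else 0))
        + (∑ a : Fin n, ∑ b : Fin n, (if b = i then t ^ 2 * w a b else 0))
        - (∑ a : Fin n, ∑ b : Fin n,
            (if a = i then (if b = i then 2 * t ^ 2 * w a b else 0) else 0)) := by
    simp only [key, Finset.sum_add_distrib, Finset.sum_sub_distrib]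
  have h2 : ∑ a : Fin n, ∑ b : Fin n, (if a = i then 2 * t * (w a b * (x a - x b)) else 0)
      = 2 * t * ∑ j, w i j * (x i - x j) := by
    rw [pull_ite, Finset.mul_sum]
  have h3 : ∑ a : Fin n, ∑ b : Fin n, (if b = i then 2 * t * (w a b * (x a - x b)) else 0)
      = -(2 * t * ∑ j, w i j * (x i - x j)) := by
    simp only [Finset.sum_ite_eq', Finset.mem_univ, if_true]
    rw [Finset.mul_sum, ← Finset.sum_neg_distrib]
    exact Finset.sum_congr rfl fun a _ => by rw [hsymm a i]; ring
  have h4 : ∑ a : Fin n, ∑ b : Fin n, (if a = i then t ^ 2 * w a b else 0)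
      = t ^ 2 * ∑ j, w i j := by
    rw [pull_ite, Finset.mul_sum]
  have h5 : ∑ a : Fin n, ∑ b : Fin n, (if b = i then t ^ 2 * w a b else 0)
      = t ^ 2 * ∑ j, w i j := by
    simp only [Finset.sum_ite_eq', Finset.mem_univ, if_true]
    rw [Finset.mul_sum]
    exact Finset.sum_congr rfl fun a _ => by rw [hsymm a i]
  have h6 : ∑ a : Fin n, ∑ b : Fin n,
      (if a = i then (if b = i then 2 * t ^ 2 * w a b else 0) else 0) = 0 := by
    rw [pull_ite]
    simp [hloop]
  have hlin : ∑ j : Fin n, (x j + if j = i then t else 0) * (T j - Δ j)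
      = (∑ j : Fin n, x j * (T j - Δ j)) + t * (T i - Δ i) := by
    simp only [add_mul, ite_mul, zero_mul, Finset.sum_add_distrib, Finset.sum_ite_eq',
      Finset.mem_univ, if_true]
  rw [hsplit, h2, h3, h4, h5, h6, hlin]
  ring

theorem stmt6 {n : ℕ} (w : Fin n → Fin n → ℝ) (Δ T : Fin n → ℝ)
    (hsymm : ∀ i j, w i j = w j i)
    (hnonneg : ∀ i j, 0 ≤ w i j)
    (hloop : ∀ i, w i i = 0)
    (hconn : ∀ i j : Fin n, Relation.ReflTransGen (fun a b => 0 < w a b) i j)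
    (hΔ : ∀ i, 0 ≤ Δ i) (hT : ∀ i, 1 ≤ T i)
    (xstar : Fin n → ℝ)
    (hx_nonneg : ∀ i, 0 ≤ xstar i)
    (hx_min : ∀ y : Fin n → ℝ, (∀ i, 0 ≤ y i) →
      dualObj w Δ T xstar ≤ dualObj w Δ T y) :
    ∀ S : Finset (Fin n),
      ∑ i ∈ S, ∑ j ∈ Sᶜ, w i j * (xstar i - xstar j) ≤ ∑ i ∈ S, Δ i := by
  have key : ∀ i : Fin n, ∑ j, w i j * (xstar i - xstar j) ≤ Δ i := by
    intro i
    rcases eq_or_lt_of_le (hx_nonneg i) with h0 | hpos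
    · have : ∑ j, w i j * (xstar i - xstar j) ≤ 0 := by
        apply Finset.sum_nonpos
        intro j _
        have hxi : xstar i = 0 := h0.symm
        nlinarith [hx_nonneg j, hnonneg i j]
      linarith [hΔ i]
    · -- xstar i > 0 : complementary slackness gives s + (T i - Δ i) ≤ 0
      by_contra hcon
      push_neg at hcon
      set s := ∑ j, w i j * (xstar i - xstar j) with hs
      set C := ∑ j, w i j with hC
      have hCnn : 0 ≤ C := Finset.sum_nonneg fun j _ => hnonneg i j
      -- we don't directly have g>0; derive it
      have hg : 0 < s + (T i - Δ i) := by
        have := hT i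
        linarith
      set g := s + (T i - Δ i) with hgdef
      set t := min (xstar i) (g / (C + 1)) with ht
      have htpos : 0 < t := lt_min hpos (div_pos hg (by linarith))
      have htle : t ≤ g / (C + 1) := min_le_right _ _
      have hynn : ∀ j, 0 ≤ xstar j + if j = i then -t else 0 := by
        intro j
        by_cases hj : j = i
        · subst hj
          rw [if_pos rfl]
          have : t ≤ xstar j := min_le_left _ _
          linarith
        · simp only [if_neg hj, add_zero]; exact hx_nonneg j
      have hmin := hx_min _ hynn
      rw [expand_var w Δ T hsymm hloop xstar i (-t)] at hmin
      have hquad : (-t) ^ 2 / 2 * C = t ^ 2 / 2 * C := by ring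
      have htC : t * (C + 1) ≤ g := by
        rwa [le_div_iff₀ (show (0:ℝ) < C + 1 by linarith)] at htle
      -- from hmin: 0 ≤ -t * g + t^2/2 * C
      have h1 : 0 ≤ -t * g + t ^ 2 / 2 * C := by nlinarith [hmin]
      nlinarith [htpos, hg, hCnn, htC]
  intro S
  have hcancel : ∑ i ∈ S, ∑ j ∈ S, w i j * (xstar i - xstar j) = 0 := by
    have h1 : ∑ i ∈ S, ∑ j ∈ S, w i j * (xstar i - xstar j)
        = ∑ i ∈ S, ∑ j ∈ S, -(w j i * (xstar j - xstar i)) := by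
      refine Finset.sum_congr rfl fun i _ => Finset.sum_congr rfl fun j _ => ?_
      rw [hsymm i j]; ring
    have h2 : ∑ i ∈ S, ∑ j ∈ S, -(w j i * (xstar j - xstar i))
        = -∑ i ∈ S, ∑ j ∈ S, w i j * (xstar i - xstar j) := by
      rw [Finset.sum_comm]
      simp [Finset.sum_neg_distrib]
    linarith [h1, h2, h1.trans h2]
  have hsplit : ∀ i : Fin n, ∑ j, w i j * (xstar i - xstar j)
      = ∑ j ∈ S, w i j * (xstar i - xstar j) + ∑ j ∈ Sᶜ, w i j * (xstar i - xstar j) :=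
    fun i => (Finset.sum_add_sum_compl S _).symm
  calc ∑ i ∈ S, ∑ j ∈ Sᶜ, w i j * (xstar i - xstar j)
      = ∑ i ∈ S, ∑ j, w i j * (xstar i - xstar j) := by
        rw [Finset.sum_congr rfl fun i _ => hsplit i, Finset.sum_add_distrib, hcancel]
        ring
    _ ≤ ∑ i ∈ S, Δ i := Finset.sum_le_sum fun i _ => key i
end

section
/- Let K ⊆ V, let s ∈ K, let β > 0, and let the source vector place all mass on the seed: Δ_s = (1+β)·Σ_{i∈K} T_i and Δ_i = 0 for i ≠ s. Let x* be a minimizer of the dual flow diffusion problem. If x*_i > 0 for every i ∈ K, then the sink capacities of the false positives are bounded: Σ_{i ∈ supp(x*)\K} T_i ≤ β·Σ_{i∈K} T_i. -/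
theorem stmt8 {n : ℕ} (w : Fin n → Fin n → ℝ) (Δ T : Fin n → ℝ)
    (hsymm : ∀ i j, w i j = w j i)
    (hnonneg : ∀ i j, 0 ≤ w i j)
    (hloop : ∀ i, w i i = 0)
    (hconn : ∀ i j : Fin n, Relation.ReflTransGen (fun a b => 0 < w a b) i j)
    (hΔ : ∀ i, 0 ≤ Δ i) (hT : ∀ i, 1 ≤ T i)
    (K : Finset (Fin n)) (s : Fin n) (hs : s ∈ K)
    (β : ℝ) (hβ : 0 < β)
    (hΔs : Δ s = (1 + β) * ∑ i ∈ K, T i)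
    (hΔ0 : ∀ i, i ≠ s → Δ i = 0)
    (xstar : Fin n → ℝ)
    (hx_nonneg : ∀ i, 0 ≤ xstar i)
    (hx_min : ∀ y : Fin n → ℝ, (∀ i, 0 ≤ y i) →
      dualObj w Δ T xstar ≤ dualObj w Δ T y)
    (hK : ∀ i ∈ K, 0 < xstar i) :
    ∑ i ∈ (Finset.univ.filter (fun i => xstar i ≠ 0)) \ K, T i ≤
      β * ∑ i ∈ K, T i := by
  classical
  set Dw : Fin n → ℝ := fun i => ∑ j, w i j with hDw
  set g : Fin n → ℝ :=
    fun i => (∑ j, w i j * (xstar i - xstar j)) + (T i - Δ i) with hg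
  -- Key perturbation inequality
  have key : ∀ i : Fin n, ∀ t : ℝ, 0 ≤ xstar i + t →
      0 ≤ t * g i + t ^ 2 / 2 * Dw i := by
    intro i t ht
    set y : Fin n → ℝ := Function.update xstar i (xstar i + t) with hy
    have hyy : ∀ a, y a = xstar a + t * (if a = i then (1 : ℝ) else 0) := by
      intro a
      by_cases h : a = i
      · subst h; simp [hy]
      · simp [hy, h]
    have hynn : ∀ a, 0 ≤ y a := by
      intro a
      by_cases h : a = i
      · subst h; simpa [hy] using ht
      · simpa [hy, h] using hx_nonneg a
    have hmin := hx_min y hynn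
    have e1 : ∀ a b : Fin n, w a b * (y a - y b) ^ 2
        = w a b * (xstar a - xstar b) ^ 2
          + 2 * t * ((if a = i then (1 : ℝ) else 0) * (w a b * (xstar a - xstar b)))
          - 2 * t * ((if b = i then (1 : ℝ) else 0) * (w a b * (xstar a - xstar b)))
          + t ^ 2 * ((if a = i then (1 : ℝ) else 0) * w a b)
          + t ^ 2 * ((if b = i then (1 : ℝ) else 0) * w a b)
          - 2 * t ^ 2 * ((if a = i then (1 : ℝ) else 0) * (if b = i then (1 : ℝ) else 0) * w a b) := by
      intro a b
      rw [hyy a, hyy b]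
      by_cases ha : a = i <;> by_cases hb : b = i <;> simp [ha, hb] <;> ring
    have sA : ∑ a : Fin n,
        (if a = i then (1 : ℝ) else 0) * ∑ b : Fin n, w a b * (xstar a - xstar b)
        = ∑ b, w i b * (xstar i - xstar b) := by
      simp [ite_mul]
    have sB : ∑ a : Fin n, ∑ b : Fin n,
        (if b = i then (1 : ℝ) else 0) * (w a b * (xstar a - xstar b))
        = -∑ b, w i b * (xstar i - xstar b) := by
      rw [Finset.sum_comm]
      have h1 : ∀ b : Fin n, ∑ a : Fin n,
          (if b = i then (1 : ℝ) else 0) * (w a b * (xstar a - xstar b))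
          = (if b = i then (∑ a, w a b * (xstar a - xstar b)) else 0) := by
        intro b; split <;> simp [Finset.mul_sum]
      rw [Finset.sum_congr rfl fun b _ => h1 b]
      rw [Finset.sum_ite_eq' Finset.univ i
        (fun b => ∑ a, w a b * (xstar a - xstar b))]
      simp only [Finset.mem_univ, if_true]
      rw [← Finset.sum_neg_distrib]
      refine Finset.sum_congr rfl fun a _ => ?_
      rw [hsymm a i]; ring
    have sC : ∑ a : Fin n,
        (if a = i then (1 : ℝ) else 0) * ∑ b : Fin n, w a b = Dw i := by
      simp [ite_mul, hDw]
    have sD : ∑ a : Fin n, ∑ b : Fin n,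
        (if b = i then (1 : ℝ) else 0) * w a b = Dw i := by
      rw [Finset.sum_comm]
      have h1 : ∀ b : Fin n, ∑ a : Fin n,
          (if b = i then (1 : ℝ) else 0) * w a b
          = (if b = i then (∑ a, w a b) else 0) := by
        intro b; split <;> simp
      rw [Finset.sum_congr rfl fun b _ => h1 b]
      rw [Finset.sum_ite_eq' Finset.univ i (fun b => ∑ a, w a b)]
      simp only [Finset.mem_univ, if_true, hDw]
      exact Finset.sum_congr rfl fun a _ => hsymm a i
    have sE : ∑ a : Fin n, ∑ b : Fin n,
        (if a = i then (1 : ℝ) else 0) * (if b = i then (1 : ℝ) else 0) * w a b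
        = 0 := by
      have h1 : ∀ a : Fin n, ∑ b : Fin n,
          (if a = i then (1 : ℝ) else 0) * (if b = i then (1 : ℝ) else 0) * w a b
          = (if a = i then w a i else 0) := by
        intro a
        split
        · simp [Finset.sum_ite_eq' Finset.univ i (fun b => w a b)]
        · simp
      rw [Finset.sum_congr rfl fun a _ => h1 a]
      simp [hloop i]
    have hQ : ∑ a : Fin n, ∑ b : Fin n, w a b * (y a - y b) ^ 2
        = (∑ a : Fin n, ∑ b : Fin n, w a b * (xstar a - xstar b) ^ 2)
          + 4 * t * (∑ b, w i b * (xstar i - xstar b)) + 2 * t ^ 2 * Dw i := by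
      calc ∑ a : Fin n, ∑ b : Fin n, w a b * (y a - y b) ^ 2
          = ∑ a : Fin n, ∑ b : Fin n,
            (w a b * (xstar a - xstar b) ^ 2
            + 2 * t * ((if a = i then (1 : ℝ) else 0) * (w a b * (xstar a - xstar b)))
            - 2 * t * ((if b = i then (1 : ℝ) else 0) * (w a b * (xstar a - xstar b)))
            + t ^ 2 * ((if a = i then (1 : ℝ) else 0) * w a b)
            + t ^ 2 * ((if b = i then (1 : ℝ) else 0) * w a b)
            - 2 * t ^ 2 * ((if a = i then (1 : ℝ) else 0) * (if b = i then (1 : ℝ) else 0) * w a b)) := by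
            exact Finset.sum_congr rfl fun a _ => Finset.sum_congr rfl fun b _ => e1 a b
        _ = _ := by
            simp only [Finset.sum_add_distrib, Finset.sum_sub_distrib, ← Finset.mul_sum]
            rw [sA, sB, sC, sD, sE]
            ring
    have hLin : ∑ a, y a * (T a - Δ a)
        = (∑ a, xstar a * (T a - Δ a)) + t * (T i - Δ i) := by
      have h1 : ∀ a, y a * (T a - Δ a)
          = xstar a * (T a - Δ a) + (if a = i then t * (T a - Δ a) else 0) := by
        intro a; rw [hyy a]; split <;> ring
      rw [Finset.sum_congr rfl fun a _ => h1 a, Finset.sum_add_distrib]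
      simp
    have hobj : dualObj w Δ T y
        = dualObj w Δ T xstar + (t * g i + t ^ 2 / 2 * Dw i) := by
      unfold dualObj
      rw [hQ, hLin, hg]
      ring
    rw [hobj] at hmin
    linarith
  have hDnn : ∀ i, 0 ≤ Dw i := fun i => Finset.sum_nonneg fun j _ => hnonneg i j
  -- gradient vanishes on the support
  have grad0 : ∀ i, 0 < xstar i → g i = 0 := by
    intro i hxi
    by_contra hgi
    have habs : 0 < |g i| := abs_pos.mpr hgi
    have hD := hDnn i
    set ε : ℝ := min (xstar i) (|g i| / (Dw i + 1)) with hε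
    have hε0 : 0 < ε := lt_min hxi (div_pos habs (by linarith))
    have hεx : ε ≤ xstar i := min_le_left _ _
    have h1 := key i ε (by linarith)
    have h2 := key i (-ε) (by linarith)
    have hbound : |g i| ≤ ε * Dw i / 2 := by
      rw [abs_le]
      constructor <;> nlinarith
    have hεle : ε * (Dw i + 1) ≤ |g i| := by
      have := min_le_right (xstar i) (|g i| / (Dw i + 1))
      calc ε * (Dw i + 1) ≤ (|g i| / (Dw i + 1)) * (Dw i + 1) := by nlinarith
        _ = |g i| := by field_simp
    nlinarith
  set S := Finset.univ.filter (fun i => xstar i ≠ 0) with hS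
  have hKS : K ⊆ S := by
    intro i hi
    simp only [hS, Finset.mem_filter, Finset.mem_univ, true_and]
    exact ne_of_gt (hK i hi)
  have hxS : ∀ i ∉ S, xstar i = 0 := by
    intro i hi
    by_contra h
    exact hi (by simp [hS, h])
  have hgS : ∀ i ∈ S, g i = 0 := by
    intro i hi
    have : xstar i ≠ 0 := by simpa [hS] using hi
    exact grad0 i (lt_of_le_of_ne (hx_nonneg i) (Ne.symm this))
  have hsum0 : ∑ i ∈ S, g i = 0 := Finset.sum_eq_zero hgS
  -- the Laplacian part summed over S is nonnegative
  have hsplit : ∀ i : Fin n, ∑ j, w i j * (xstar i - xstar j)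
      = (∑ j ∈ S, w i j * (xstar i - xstar j))
        + ∑ j ∈ Sᶜ, w i j * (xstar i - xstar j) :=
    fun i => (Finset.sum_add_sum_compl S _).symm
  have anti : ∑ i ∈ S, ∑ j ∈ S, w i j * (xstar i - xstar j) = 0 := by
    have h2 : ∑ i ∈ S, ∑ j ∈ S, w i j * (xstar i - xstar j)
        = -∑ i ∈ S, ∑ j ∈ S, w i j * (xstar i - xstar j) := by
      conv_lhs => rw [Finset.sum_comm]
      rw [← Finset.sum_neg_distrib]
      refine Finset.sum_congr rfl fun j _ => ?_
      rw [← Finset.sum_neg_distrib]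
      refine Finset.sum_congr rfl fun i _ => ?_
      rw [hsymm i j]; ring
    linarith
  have hcross : 0 ≤ ∑ i ∈ S, ∑ j ∈ Sᶜ, w i j * (xstar i - xstar j) := by
    refine Finset.sum_nonneg fun i hi => Finset.sum_nonneg fun j hj => ?_
    have hj0 : xstar j = 0 := hxS j (by simpa using hj)
    rw [hj0]
    have := hx_nonneg i
    have := hnonneg i j
    nlinarith
  have hLnn : 0 ≤ ∑ i ∈ S, ∑ j, w i j * (xstar i - xstar j) := by
    rw [Finset.sum_congr rfl fun i _ => hsplit i, Finset.sum_add_distrib, anti]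
    simpa using hcross
  have hTS : ∑ i ∈ S, (T i - Δ i) ≤ 0 := by
    have : ∑ i ∈ S, g i
        = (∑ i ∈ S, ∑ j, w i j * (xstar i - xstar j)) + ∑ i ∈ S, (T i - Δ i) := by
      rw [hg, ← Finset.sum_add_distrib]
    rw [this] at hsum0
    linarith
  have hΔS : ∑ i ∈ S, Δ i = Δ s :=
    Finset.sum_eq_single_of_mem s (hKS hs) fun j _ hj => hΔ0 j hj
  have hTsum : ∑ i ∈ S, T i ≤ (1 + β) * ∑ i ∈ K, T i := by
    have := Finset.sum_sub_distrib (s := S) (f := T) (g := Δ)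
    rw [this, hΔS, hΔs] at hTS
    linarith
  have hsdiff : ∑ i ∈ S \ K, T i = (∑ i ∈ S, T i) - ∑ i ∈ K, T i :=
    Finset.sum_sdiff_eq_sub hKS
  rw [hS] at hsdiff ⊢
  rw [hsdiff]
  linarith
end

section
/- Let 0 < δ ≤ 1 and ε > 0. Suppose p ≥ ((4+ε)/δ²)·(log k)/(k−1) and k ≥ 20. Consider a random graph on a vertex set K of size k where each unordered pair of distinct vertices is independently joined by an edge with probability p. Then with probability at least 1 − e·k^{−ε/2}, every subset C ⊂ K with 1 ≤ |C| ≤ k−1 satisfies cut_K(C) ≥ (1−δ)·p·(k−1), where cut_K(C) denotes the number of edges between C and K\C. -/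
/-!
For a fixed cut `C` with `m = min(|C|, k - |C|)`, the cut size is a sum of at least `m (k - m)`
independent Bernoulli(p) indicators, so the Chernoff bound at `s = log (1 - δ)` bounds the
probability that it falls below `(1 - δ) p (k - 1)` by `k^{-(m + 1 + ε/2)}`; the assumption on `p`
is exactly what makes this exponent work, via `-(1 - δ) log (1 - δ) ≤ δ - δ²/2`. There are at most
`binom(k, m) ≤ k^m` cuts of each size, so the union bound over all cuts costs at most
`(k + 1) k^{-(1 + ε/2)} ≤ e k^{-ε/2}`.
-/

open MeasureTheory ProbabilityTheory

/-- Number of edges of the graph with adjacency `A` between `C` and its complement. -/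
def cutK {k : ℕ} (A : Fin k → Fin k → Bool) (C : Finset (Fin k)) : ℕ :=
  (Finset.univ.filter (fun e : Fin k × Fin k =>
    e.1 < e.2 ∧ A e.1 e.2 = true ∧
      ((e.1 ∈ C ∧ e.2 ∉ C) ∨ (e.1 ∉ C ∧ e.2 ∈ C)))).card

open Finset

section CrossingPairs

variable {k : ℕ}

def crossingPairs (C : Finset (Fin k)) : Finset {e : Fin k × Fin k // e.1 < e.2} :=
  {e | (e.1.1 ∈ C ∧ e.1.2 ∉ C) ∨ (e.1.1 ∉ C ∧ e.1.2 ∈ C)}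

lemma cutK_eq_card_filter_crossingPairs (A : Fin k → Fin k → Bool) (C : Finset (Fin k)) :
    cutK A C = #{e ∈ crossingPairs C | A e.1.1 e.1.2 = true} := by
  refine (card_bij (fun e _ => e.1) ?_ ?_ ?_).symm
  · intro e he
    simp only [crossingPairs, mem_filter, mem_univ, true_and] at he ⊢
    exact ⟨e.2, he.2, he.1⟩
  · intro e₁ _ e₂ _ h
    exact Subtype.ext h
  · intro e he
    simp only [mem_filter, mem_univ, true_and] at he
    exact ⟨⟨e, he.1⟩, by simp [crossingPairs, he.2.1, he.2.2], rfl⟩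

lemma card_mul_sub_card_le_card_crossingPairs (C : Finset (Fin k)) :
    #C * (k - #C) ≤ #(crossingPairs C) := by
  calc #C * (k - #C) = #(C ×ˢ Cᶜ) := by rw [card_product, card_compl, Fintype.card_fin]
    _ ≤ #(crossingPairs C) := by
      refine card_le_card_of_surjOn (fun e => if e.1.1 ∈ C then e.1 else e.1.swap) ?_
      rintro ⟨a, b⟩ hab
      simp only [coe_product, Set.mem_prod, mem_coe, mem_compl] at hab
      obtain ⟨ha, hb⟩ := hab
      rcases lt_or_gt_of_ne (ne_of_mem_of_not_mem ha hb) with h | h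
      · exact ⟨⟨(a, b), h⟩, by simp [crossingPairs, ha, hb], by simp [ha]⟩
      · exact ⟨⟨(b, a), h⟩, by simp [crossingPairs, ha, hb], by simp [hb]⟩

end CrossingPairs

lemma neg_mul_log_le_one_sub_sq_div_two {u : ℝ} (hu : 0 < u) (hu1 : u ≤ 1) :
    -(u * Real.log u) ≤ (1 - u ^ 2) / 2 := by
  have h : -Real.log u ≤ (u⁻¹ - u) / 2 := by
    have := Real.self_le_sinh_iff.2 (neg_nonneg.2 (Real.log_nonpos hu.le hu1))
    rwa [Real.sinh_neg, Real.sinh_log hu, ← neg_div, neg_sub] at this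
  have hmul := mul_le_mul_of_nonneg_left h hu.le
  rw [mul_div_assoc', mul_sub, mul_inv_cancel₀ hu.ne'] at hmul
  linarith

lemma chernoff_exponent_le {k m N δ ε p : ℝ} (hk : 3 ≤ k) (hm1 : 1 ≤ m) (hm2 : 2 * m ≤ k)
    (hN : m * (k - m) ≤ N) (hδ0 : 0 < δ) (hδ1 : δ < 1) (hε : 0 ≤ ε)
    (hp : (4 + ε) / δ ^ 2 * (Real.log k / (k - 1)) ≤ p) :
    -Real.log (1 - δ) * ((1 - δ) * p * (k - 1)) - p * δ * N ≤ -(m + 1 + ε / 2) * Real.log k := by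
  have hL : 0 < Real.log k := Real.log_pos (by linarith)
  have hQ : (4 + ε) * Real.log k ≤ p * δ ^ 2 * (k - 1) := by
    rwa [div_mul_div_comm, div_le_iff₀ (by nlinarith), ← mul_assoc] at hp
  have hp0 : 0 ≤ p :=
    le_trans (mul_nonneg (by positivity) (div_nonneg hL.le (by linarith))) hp
  have hent : -((1 - δ) * Real.log (1 - δ)) ≤ δ - δ ^ 2 / 2 := by
    have := neg_mul_log_le_one_sub_sq_div_two (u := 1 - δ) (by linarith) (by linarith)
    linarith
  have hN' : (m + 3) * (k - 1) ≤ 4 * N := by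
    nlinarith [mul_nonneg (sub_nonneg.2 hm1) (by linarith : 0 ≤ 3 * k - 4 * m - 3)]
  calc -Real.log (1 - δ) * ((1 - δ) * p * (k - 1)) - p * δ * N
      ≤ p * (k - 1) * (δ - δ ^ 2 / 2) - p * δ * N := by
        nlinarith [mul_le_mul_of_nonneg_left hent (by nlinarith : 0 ≤ p * (k - 1))]
    _ ≤ -(p * δ ^ 2 * (k - 1)) * (m + 1) / 4 := by
        nlinarith [mul_nonneg (mul_nonneg hp0 (by nlinarith : 0 ≤ δ - δ ^ 2))
            (by nlinarith : 0 ≤ N - (k - 1)),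
          mul_nonneg (mul_nonneg hp0 (sq_nonneg δ)) (by linarith : 0 ≤ 4 * N - (m + 3) * (k - 1))]
    _ ≤ -((4 + ε) * Real.log k) * (m + 1) / 4 := by gcongr
    _ ≤ -(m + 1 + ε / 2) * Real.log k := by
        nlinarith [mul_nonneg (mul_nonneg hε (sub_nonneg.2 hm1)) hL.le]

section Chernoff

variable {Ω ι : Type*} [MeasurableSpace Ω] {μ : Measure Ω} [IsProbabilityMeasure μ] {p : ℝ}

lemma mgf_ite_one_zero {B : Ω → Bool} (hB : Measurable B) (hp : 0 ≤ p)
    (hBp : μ {ω | B ω = true} = ENNReal.ofReal p) (s : ℝ) :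
    mgf (fun ω => if B ω then (1 : ℝ) else 0) μ s = 1 + p * (Real.exp s - 1) := by
  have hset : MeasurableSet {ω | B ω = true} := hB (measurableSet_singleton true)
  have hexp : (fun ω => Real.exp (s * if B ω then 1 else 0))
      = fun ω => {ω | B ω = true}.indicator (fun _ => Real.exp s - 1) ω + 1 := by
    funext ω
    by_cases h : B ω = true <;> simp [h]
  rw [mgf, hexp, integral_add ((integrable_const _).indicator hset) (integrable_const 1),
    integral_indicator_const _ hset, integral_const, measureReal_def, hBp,
    ENNReal.toReal_ofReal hp]
  simp only [smul_eq_mul, probReal_univ, one_mul]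
  ring

lemma measureReal_card_filter_le_le_exp {B : ι → Ω → Bool} (hB : ∀ i, Measurable (B i))
    (hindep : iIndepFun B μ) (hp : 0 ≤ p) (hBp : ∀ i, μ {ω | B i ω = true} = ENNReal.ofReal p)
    (E : Finset ι) {s : ℝ} (hs : s ≤ 0) (t : ℝ) :
    μ.real {ω | (#{i ∈ E | B i ω = true} : ℝ) ≤ t}
      ≤ Real.exp (-s * t + p * (Real.exp s - 1) * #E) := by
  set Y : ι → Ω → ℝ := fun i ω => if B i ω then 1 else 0
  have hYm : ∀ i, Measurable (Y i) := fun i =>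
    Measurable.ite (hB i (measurableSet_singleton true)) measurable_const measurable_const
  have hY : iIndepFun Y μ :=
    hindep.comp (fun _ b => if b then 1 else 0) fun _ => measurable_from_top
  have hcount : (fun ω => (#{i ∈ E | B i ω = true} : ℝ)) = ∑ i ∈ E, Y i := by
    ext ω
    simp only [Y, natCast_card_filter, Finset.sum_apply]
  have hint : Integrable (fun ω => Real.exp (s * ∑ i ∈ E, Y i ω)) μ := by
    refine Integrable.mono' (integrable_const 1) ?_ (Filter.Eventually.of_forall fun ω => ?_)
    · exact ((Finset.measurable_sum E fun i _ => hYm i).const_mul s).exp.aestronglyMeasurable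
    · rw [Real.norm_of_nonneg (Real.exp_pos _).le, Real.exp_le_one_iff]
      exact mul_nonpos_of_nonpos_of_nonneg hs (sum_nonneg fun i _ => by positivity)
  have hmgf : ∀ i, mgf (Y i) μ s ≤ Real.exp (p * (Real.exp s - 1)) := fun i => by
    rw [mgf_ite_one_zero (hB i) hp (hBp i)]
    linarith [Real.add_one_le_exp (p * (Real.exp s - 1))]
  calc μ.real {ω | (#{i ∈ E | B i ω = true} : ℝ) ≤ t}
      ≤ Real.exp (-s * t) * mgf (∑ i ∈ E, Y i) μ s := by
        rw [show {ω | (#{i ∈ E | B i ω = true} : ℝ) ≤ t} = {ω | (∑ i ∈ E, Y i) ω ≤ t} by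
          simp_rw [← hcount]]
        exact measure_le_le_exp_mul_mgf t hs (by simpa using hint)
    _ = Real.exp (-s * t) * ∏ i ∈ E, mgf (Y i) μ s := by rw [hY.mgf_sum hYm]
    _ ≤ Real.exp (-s * t) * ∏ _i ∈ E, Real.exp (p * (Real.exp s - 1)) := by
        gcongr with i
        · exact fun i _ => mgf_nonneg
        · exact hmgf i
    _ = Real.exp (-s * t + p * (Real.exp s - 1) * #E) := by
        rw [prod_const, ← Real.exp_nat_mul, ← Real.exp_add]
        ring_nf

end Chernoff

lemma sum_inv_pow_min_card_le (k : ℕ) :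
    ∑ C : Finset (Fin k), ((k : ℝ) ^ min #C (k - #C))⁻¹ ≤ k + 1 := by
  have h := sum_powerset_apply_card (fun c => ((k : ℝ) ^ min c (k - c))⁻¹)
    (x := (univ : Finset (Fin k)))
  rw [powerset_univ, card_univ, Fintype.card_fin] at h
  rw [h]
  calc ∑ c ∈ range (k + 1), k.choose c • ((k : ℝ) ^ min c (k - c))⁻¹
      ≤ ∑ _c ∈ range (k + 1), (1 : ℝ) := by
        refine sum_le_sum fun c hc => ?_
        have hck : c ≤ k := Nat.lt_succ_iff.1 (mem_range.1 hc)
        have hchoose : (k.choose c : ℝ) ≤ (k : ℝ) ^ min c (k - c) := by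
          rcases min_choice c (k - c) with h | h <;> rw [h]
          · exact_mod_cast Nat.choose_le_pow k c
          · rw [← Nat.choose_symm hck]
            exact_mod_cast Nat.choose_le_pow k (k - c)
        rw [nsmul_eq_mul]
        exact mul_inv_le_one_of_le₀ hchoose (by positivity)
    _ = k + 1 := by simp

lemma sum_inv_pow_min_card_mul_rpow_le {k : ℕ} (hk : 0 < k) (ε : ℝ) :
    ∑ C : Finset (Fin k), ((k : ℝ) ^ min #C (k - #C))⁻¹ * (k : ℝ) ^ (-(1 + ε / 2))
      ≤ Real.exp 1 * (k : ℝ) ^ (-(ε / 2)) := by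
  have hk' : (0 : ℝ) < k := by exact_mod_cast hk
  have hinv : (k : ℝ)⁻¹ ≤ 1 := inv_le_one_of_one_le₀ (by exact_mod_cast hk)
  rw [← sum_mul]
  calc (∑ C : Finset (Fin k), ((k : ℝ) ^ min #C (k - #C))⁻¹) * (k : ℝ) ^ (-(1 + ε / 2))
      ≤ (k + 1) * (k : ℝ) ^ (-(1 + ε / 2)) := by
        gcongr
        exact sum_inv_pow_min_card_le k
    _ = (1 + (k : ℝ)⁻¹) * (k : ℝ) ^ (-(ε / 2)) := by
        rw [neg_add, Real.rpow_add hk', Real.rpow_neg_one]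
        field_simp
    _ ≤ Real.exp 1 * (k : ℝ) ^ (-(ε / 2)) := by
        gcongr
        linarith [Real.add_one_le_exp (k : ℝ)⁻¹, Real.exp_le_exp.2 hinv]

section RandomGraph

variable {k : ℕ} {Ω : Type*} [MeasurableSpace Ω] {μ : Measure Ω} [IsProbabilityMeasure μ]
  {X : Fin k → Fin k → Ω → Bool} {δ ε p : ℝ}

lemma measure_cutK_lt_le (hmeas : ∀ i j, Measurable (X i j))
    (hindep : iIndepFun (fun e : {e : Fin k × Fin k // e.1 < e.2} => X e.1.1 e.1.2) μ)
    (hber : ∀ i j : Fin k, i < j → μ {ω | X i j ω = true} = ENNReal.ofReal p)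
    (hk : 3 ≤ k) (hδ0 : 0 < δ) (hδ1 : δ < 1) (hε : 0 ≤ ε)
    (hp : ((4 + ε) / δ ^ 2) * (Real.log k / ((k : ℝ) - 1)) ≤ p)
    {C : Finset (Fin k)} (hC : C.Nonempty) (hCu : C ≠ univ) :
    μ {ω | (cutK (fun i j => X i j ω) C : ℝ) < (1 - δ) * p * ((k : ℝ) - 1)}
      ≤ ENNReal.ofReal (((k : ℝ) ^ min #C (k - #C))⁻¹ * (k : ℝ) ^ (-(1 + ε / 2))) := by
  set m := min #C (k - #C) with hm
  have hCk : #C < k := by simpa using card_lt_card (ssubset_univ_iff.2 hCu)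
  have hm1 : (1 : ℝ) ≤ m := by exact_mod_cast le_min (card_pos.2 hC) (by omega)
  have hm2 : 2 * (m : ℝ) ≤ k := by exact_mod_cast (by omega : 2 * m ≤ k)
  have hN : (m : ℝ) * (k - m) ≤ #(crossingPairs C) := by
    have hmN : m * (k - m) = #C * (k - #C) := by
      rcases min_choice #C (k - #C) with h | h <;> rw [hm, h]
      rw [Nat.sub_sub_self hCk.le, mul_comm]
    rw [← Nat.cast_sub (by omega), ← Nat.cast_mul, hmN]
    exact_mod_cast card_mul_sub_card_le_card_crossingPairs C
  have hk' : (0 : ℝ) < k := by positivity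
  have hp0 : 0 ≤ p := le_trans (mul_nonneg (by positivity)
    (div_nonneg (Real.log_nonneg (by exact_mod_cast (by omega : 1 ≤ k))) (by linarith))) hp
  have hchernoff := measureReal_card_filter_le_le_exp (μ := μ)
    (B := fun e : {e : Fin k × Fin k // e.1 < e.2} => X e.1.1 e.1.2) (fun e => hmeas _ _) hindep
    hp0 (fun e => hber _ _ e.2) (crossingPairs C) (s := Real.log (1 - δ))
    (Real.log_nonpos (by linarith) (by linarith)) ((1 - δ) * p * ((k : ℝ) - 1))
  rw [ENNReal.le_ofReal_iff_toReal_le (measure_ne_top _ _) (by positivity), ← measureReal_def]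
  calc μ.real {ω | (cutK (fun i j => X i j ω) C : ℝ) < (1 - δ) * p * ((k : ℝ) - 1)}
      ≤ μ.real {ω | (cutK (fun i j => X i j ω) C : ℝ) ≤ (1 - δ) * p * ((k : ℝ) - 1)} :=
        measureReal_mono (Set.ofPred_subset_ofPred.2 fun _ => le_of_lt)
    _ ≤ Real.exp (-Real.log (1 - δ) * ((1 - δ) * p * (k - 1)) - p * δ * #(crossingPairs C)) := by
        simp only [cutK_eq_card_filter_crossingPairs]
        convert hchernoff using 2
        rw [Real.exp_log (by linarith)]
        ring
    _ ≤ Real.exp (-(m + 1 + ε / 2) * Real.log k) :=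
        Real.exp_le_exp.2 (chernoff_exponent_le (by exact_mod_cast hk) hm1 hm2 hN hδ0 hδ1 hε hp)
    _ = ((k : ℝ) ^ m)⁻¹ * (k : ℝ) ^ (-(1 + ε / 2)) := by
        rw [← Real.rpow_natCast, ← Real.rpow_neg hk'.le, ← Real.rpow_add hk',
          Real.rpow_def_of_pos hk']
        ring_nf

lemma measure_exists_cutK_lt_le (hmeas : ∀ i j, Measurable (X i j))
    (hindep : iIndepFun (fun e : {e : Fin k × Fin k // e.1 < e.2} => X e.1.1 e.1.2) μ)
    (hber : ∀ i j : Fin k, i < j → μ {ω | X i j ω = true} = ENNReal.ofReal p)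
    (hk : 3 ≤ k) (hδ0 : 0 < δ) (hδ1 : δ < 1) (hε : 0 ≤ ε)
    (hp : ((4 + ε) / δ ^ 2) * (Real.log k / ((k : ℝ) - 1)) ≤ p) :
    μ {ω | ∃ C : Finset (Fin k), C.Nonempty ∧ C ≠ univ ∧
        (cutK (fun i j => X i j ω) C : ℝ) < (1 - δ) * p * ((k : ℝ) - 1)}
      ≤ ENNReal.ofReal (Real.exp 1 * (k : ℝ) ^ (-(ε / 2))) := by
  set f : Finset (Fin k) → ℝ :=
    fun C => ((k : ℝ) ^ min #C (k - #C))⁻¹ * (k : ℝ) ^ (-(1 + ε / 2))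
  have hbad : {ω | ∃ C : Finset (Fin k), C.Nonempty ∧ C ≠ univ ∧
        (cutK (fun i j => X i j ω) C : ℝ) < (1 - δ) * p * ((k : ℝ) - 1)}
      ⊆ ⋃ C ∈ ({C | C.Nonempty ∧ C ≠ univ} : Finset (Finset (Fin k))),
        {ω | (cutK (fun i j => X i j ω) C : ℝ) < (1 - δ) * p * ((k : ℝ) - 1)} := by
    rintro ω ⟨C, hC, hCu, hlt⟩
    exact Set.mem_biUnion (by simp [hC, hCu]) hlt
  calc _ ≤ ∑ C ∈ ({C | C.Nonempty ∧ C ≠ univ} : Finset (Finset (Fin k))),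
        μ {ω | (cutK (fun i j => X i j ω) C : ℝ) < (1 - δ) * p * ((k : ℝ) - 1)} :=
        (measure_mono hbad).trans (measure_biUnion_finset_le _ _)
    _ ≤ ∑ C ∈ ({C | C.Nonempty ∧ C ≠ univ} : Finset (Finset (Fin k))), ENNReal.ofReal (f C) := by
        refine sum_le_sum fun C hC => ?_
        obtain ⟨hC, hCu⟩ := (mem_filter.1 hC).2
        exact measure_cutK_lt_le hmeas hindep hber hk hδ0 hδ1 hε hp hC hCu
    _ ≤ ∑ C, ENNReal.ofReal (f C) := sum_le_sum_of_subset (filter_subset _ _)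
    _ = ENNReal.ofReal (∑ C, f C) := (ENNReal.ofReal_sum_of_nonneg fun C _ => by positivity).symm
    _ ≤ _ := ENNReal.ofReal_le_ofReal (sum_inv_pow_min_card_mul_rpow_le (by omega) ε)

end RandomGraph

theorem stmt10_general (k : ℕ) (hk : 20 ≤ k) (δ ε p : ℝ)
    (hδ0 : 0 < δ) (hδ1 : δ ≤ 1) (hε : 0 < ε)
    (hp : ((4 + ε) / δ ^ 2) * (Real.log k / ((k : ℝ) - 1)) ≤ p)
    (Ω : Type) (_mΩ : MeasurableSpace Ω) (μ : Measure Ω) [IsProbabilityMeasure μ]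
    (X : Fin k → Fin k → Ω → Bool)
    (hmeas : ∀ i j, Measurable (X i j))
    (hindep : iIndepFun
      (fun e : {e : Fin k × Fin k // e.1 < e.2} => X e.1.1 e.1.2) μ)
    (hber : ∀ i j : Fin k, i < j → μ {ω | X i j ω = true} = ENNReal.ofReal p) :
    ENNReal.ofReal (1 - Real.exp 1 * (k : ℝ) ^ (-(ε / 2))) ≤
      μ {ω | ∀ C : Finset (Fin k), C.Nonempty → C ≠ Finset.univ →
        (1 - δ) * p * ((k : ℝ) - 1) ≤ (cutK (fun i j => X i j ω) C : ℝ)} := by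
  rcases hδ1.eq_or_lt with rfl | hδ1
  · simp only [sub_self, zero_mul, Nat.cast_nonneg, implies_true, Set.ofPred_true, measure_univ,
      ENNReal.ofReal_le_one, tsub_le_iff_right, le_add_iff_nonneg_right]
    positivity
  set G := {ω | ∀ C : Finset (Fin k), C.Nonempty → C ≠ Finset.univ →
    (1 - δ) * p * ((k : ℝ) - 1) ≤ (cutK (fun i j => X i j ω) C : ℝ)}
  have hGc : μ Gᶜ ≤ ENNReal.ofReal (Real.exp 1 * (k : ℝ) ^ (-(ε / 2))) := by
    convert measure_exists_cutK_lt_le hmeas hindep hber (by omega) hδ0 hδ1 hε.le hp using 2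
    ext ω
    simp [G]
  calc ENNReal.ofReal (1 - Real.exp 1 * (k : ℝ) ^ (-(ε / 2)))
      = 1 - ENNReal.ofReal (Real.exp 1 * (k : ℝ) ^ (-(ε / 2))) := by
        rw [ENNReal.ofReal_sub _ (by positivity), ENNReal.ofReal_one]
    _ ≤ 1 - μ Gᶜ := tsub_le_tsub_left hGc 1
    _ ≤ μ G := by
        rw [tsub_le_iff_left, add_comm, ← measure_univ (μ := μ)]
        exact measure_univ_le_add_compl G

theorem stmt10 (k : ℕ) (hk : 20 ≤ k) (δ ε p : ℝ)
    (hδ0 : 0 < δ) (hδ1 : δ ≤ 1) (hε : 0 < ε)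
    (hp : ((4 + ε) / δ ^ 2) * (Real.log k / ((k : ℝ) - 1)) ≤ p) (hp1 : p ≤ 1)
    (Ω : Type) (_mΩ : MeasurableSpace Ω) (μ : Measure Ω) [IsProbabilityMeasure μ]
    (X : Fin k → Fin k → Ω → Bool)
    (hmeas : ∀ i j, Measurable (X i j))
    (hindep : iIndepFun
      (fun e : {e : Fin k × Fin k // e.1 < e.2} => X e.1.1 e.1.2) μ)
    (hber : ∀ i j : Fin k, i < j → μ {ω | X i j ω = true} = ENNReal.ofReal p) :
    ENNReal.ofReal (1 - Real.exp 1 * (k : ℝ) ^ (-(ε / 2))) ≤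
      μ {ω | ∀ C : Finset (Fin k), C.Nonempty → C ≠ Finset.univ →
        (1 - δ) * p * ((k : ℝ) - 1) ≤ (cutK (fun i j => X i j ω) C : ℝ)} :=
  stmt10_general k hk δ ε p hδ0 hδ1 hε hp Ω _mΩ μ X hmeas hindep hber
end
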